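/- arXiv:math/0507163 — 7 statements merged into one kernel-verified Lean document; each statement's English description precedes it below -/
import Mathlib

section
/- Let n ≥ 1 and let f ∈ ℚ[λ_1,…,λ_n] be a polynomial of total degree at most n−1. Then the divided symmetrization ⟨f⟩ is a constant, i.e., it lies in the image of ℚ in ℚ(λ_1,…,λ_n). Moreover, if the total degree of f is strictly less than n−1, then ⟨f⟩ = 0. -/
open MvPolynomial

section Helpers

variable {σ : Type*}

/-- The top homogeneous component of a nonzero polynomial is nonzero. -/
lemma topComponent_ne_zero {F : Type*} [CommSemiring F] {q : MvPolynomial σ F} (hq : q ≠ 0) :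
    homogeneousComponent q.totalDegree q ≠ 0 := by
  obtain ⟨d, hd, hdeq⟩ := Finset.exists_mem_eq_sup q.support
    (support_nonempty.mpr hq) (fun m => m.sum fun _ e => e)
  have hdd : d.degree = q.totalDegree := by
    rw [show q.totalDegree = d.sum fun _ e => e from hdeq]
    rfl
  intro h
  have := congrArg (coeff d) h
  rw [coeff_homogeneousComponent, if_pos hdd, coeff_zero] at this
  exact (mem_support_iff.mp hd) this

lemma eq_C_of_totalDegree_eq_zero {F : Type*} [CommSemiring F] {q : MvPolynomial σ F}
    (h : q.totalDegree = 0) : q = C (coeff 0 q) := by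
  classical
  ext d
  rcases eq_or_ne d 0 with rfl | hd
  · simp
  · rw [coeff_C, if_neg (Ne.symm hd)]
    by_contra hc
    have hmem : d ∈ q.support := mem_support_iff.mpr hc
    have := (totalDegree_eq_zero_iff σ q).mp h d hmem
    exact hd (Finsupp.ext fun x => this x)

/-- Total degree is additive when one factor is homogeneous, over a domain. -/
lemma totalDegree_mul_homog {F : Type*} [CommRing F] [IsDomain F]
    {p q : MvPolynomial σ F} {M : ℕ} (hp : p.IsHomogeneous M) (hp0 : p ≠ 0) (hq : q ≠ 0) :
    (p * q).totalDegree = M + q.totalDegree := by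
  set d := q.totalDegree with hd
  set qt := homogeneousComponent d q with hqt
  have hqt0 : qt ≠ 0 := topComponent_ne_zero hq
  have hhom : (p * qt).IsHomogeneous (M + d) := hp.mul (homogeneousComponent_isHomogeneous d q)
  have htop : (p * qt).totalDegree = M + d := hhom.totalDegree (mul_ne_zero hp0 hqt0)
  rcases eq_or_ne (q - qt) 0 with hr | hr
  · rw [sub_eq_zero.mp hr, htop]
  · have hrd : (q - qt).totalDegree < d := by
      have hmem : ∀ m ∈ (q - qt).support, (m.sum fun _ e => e) < d := by
        intro m hm
        have hcm : coeff m (q - qt) ≠ 0 := mem_support_iff.mp hm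
        have hmd : m.degree ≠ d := by
          intro hmd
          rw [coeff_sub, hqt, coeff_homogeneousComponent, if_pos hmd, sub_self] at hcm
          exact hcm rfl
        have hcq : coeff m q ≠ 0 := by
          intro h0
          rw [coeff_sub, h0, hqt, coeff_homogeneousComponent, if_neg hmd, sub_zero] at hcm
          exact hcm rfl
        have hle : (m.sum fun _ e => e) ≤ d := le_totalDegree (mem_support_iff.mpr hcq)
        have hed : (m.sum fun _ e => e) = m.degree := rfl
        rw [hed]
        exact lt_of_le_of_ne (hed ▸ hle) hmd
      have hne : (q - qt).support.Nonempty := support_nonempty.mpr hr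
      obtain ⟨m0, hm0⟩ := hne
      have hdpos : 0 < d := lt_of_le_of_lt (Nat.zero_le _) (hmem m0 hm0)
      exact (Finset.sup_lt_iff (by simpa using hdpos)).mpr hmem
    have hrest : (p * (q - qt)).totalDegree < M + d := by
      calc (p * (q - qt)).totalDegree ≤ p.totalDegree + (q - qt).totalDegree :=
            totalDegree_mul _ _
        _ ≤ M + (q - qt).totalDegree := by
            exact Nat.add_le_add_right hp.totalDegree_le _
        _ < M + d := Nat.add_lt_add_left hrd M
    have hsplit : p * q = p * qt + p * (q - qt) := by ring
    rw [hsplit, totalDegree_add_eq_left_of_totalDegree_lt (htop ▸ hrest), htop]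

/-- Product of pairwise non-dividing primes each dividing `N` divides `N`. -/
lemma prod_primes_dvd' {R : Type*} [CommMonoidWithZero R] {ι : Type*} [DecidableEq ι]
    (s : Finset ι) (g : ι → R) :
    ∀ N : R, (∀ i ∈ s, Prime (g i)) → (∀ i ∈ s, ∀ j ∈ s, i ≠ j → ¬ g i ∣ g j) →
    (∀ i ∈ s, g i ∣ N) → (∏ i ∈ s, g i) ∣ N := by
  induction s using Finset.cons_induction with
  | empty => intro N _ _ _; simp
  | cons a s ha ih =>
    intro N hp hnd hd
    obtain ⟨M, hM⟩ := hd a (Finset.mem_cons_self a s)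
    have hs : (∏ i ∈ s, g i) ∣ M := by
      refine ih M (fun i hi => hp i (Finset.mem_cons_of_mem hi))
        (fun i hi j hj hij => hnd i (Finset.mem_cons_of_mem hi) j (Finset.mem_cons_of_mem hj) hij)
        (fun i hi => ?_)
      have hdvd : g i ∣ g a * M := hM ▸ hd i (Finset.mem_cons_of_mem hi)
      rcases (hp i (Finset.mem_cons_of_mem hi)).2.2 _ _ hdvd with h | h
      · exact absurd h (hnd i (Finset.mem_cons_of_mem hi) a (Finset.mem_cons_self a s)
          (by rintro rfl; exact ha hi))
      · exact h
    rw [Finset.prod_cons, hM]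
    exact mul_dvd_mul_left (g a) hs

end Helpers

section Prime

/-- `X i - X j` is prime in `ℚ[X_0,…,X_m]` for `i ≠ j`. -/
lemma prime_X_sub_X {m : ℕ} {i j : Fin (m + 1)} (h : i ≠ j) :
    Prime (X i - X j : MvPolynomial (Fin (m + 1)) ℚ) := by
  -- first reduce to the case j = 0
  have key : ∀ t : Fin m, Prime (X t.succ - X 0 : MvPolynomial (Fin (m + 1)) ℚ) := by
    intro t
    refine (MulEquiv.prime_iff
      ((MvPolynomial.finSuccEquiv ℚ m).toRingEquiv.toMulEquiv)).mp ?_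
    show Prime ((MvPolynomial.finSuccEquiv ℚ m) (X t.succ - X 0))
    rw [map_sub, finSuccEquiv_X_succ, finSuccEquiv_X_zero]
    have : (Polynomial.C (X t) - Polynomial.X : Polynomial (MvPolynomial (Fin m) ℚ)) =
        -(Polynomial.X - Polynomial.C (X t)) := by ring
    rw [this]
    exact (Polynomial.prime_X_sub_C (X t : MvPolynomial (Fin m) ℚ)).neg
  set π := Equiv.swap j 0 with hπ
  have hπj : π j = 0 := Equiv.swap_apply_left j 0
  have hπi : π i ≠ 0 := by
    intro h0
    have : π i = π j := by rw [hπj, h0]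
    exact h (π.injective this)
  obtain ⟨t, ht⟩ := Fin.exists_succ_eq_of_ne_zero hπi
  refine (MulEquiv.prime_iff
    ((MvPolynomial.renameEquiv ℚ (π : Fin (m+1) ≃ Fin (m+1))).toRingEquiv.toMulEquiv)).mp ?_
  show Prime ((rename ⇑π) (X i - X j))
  rw [map_sub, rename_X, rename_X, hπj, ← ht]
  exact key t

end Prime

section SwapDvd

/-- If `p` is antisymmetric under swapping `i` and `j` then `X i - X j ∣ p`. -/
lemma dvd_of_swap_antisymm {σ : Type*} [DecidableEq σ] {i j : σ} (hij : i ≠ j)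
    {p : MvPolynomial σ ℚ} (h : rename (⇑(Equiv.swap i j)) p = -p) :
    (X i - X j) ∣ p := by
  classical
  set u : σ → MvPolynomial σ ℚ := fun k => if k = j then X i else X k with hu
  have hmem : ∀ q : MvPolynomial σ ℚ, q - aeval (R := ℚ) u q ∈ Ideal.span {(X i - X j : MvPolynomial σ ℚ)} := by
    intro q
    induction q using MvPolynomial.induction_on with
    | C a => simp
    | add q r hq hr =>
      have : q + r - aeval (R := ℚ) u (q + r) = (q - aeval (R := ℚ) u q) + (r - aeval (R := ℚ) u r) := by
        rw [map_add]; ring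
      rw [this]; exact Ideal.add_mem _ hq hr
    | mul_X q k hq =>
      have hXk : (X k : MvPolynomial σ ℚ) - aeval (R := ℚ) u (X k) ∈
          Ideal.span {(X i - X j : MvPolynomial σ ℚ)} := by
        rw [aeval_X, hu]
        rcases eq_or_ne k j with rfl | hkj
        · have h1 : (X k : MvPolynomial σ ℚ) -
              (fun k_1 => if k_1 = k then X i else X k_1) k = -(X i - X k) := by simp
          rw [h1]
          exact neg_mem (Ideal.subset_span rfl)
        · simp [hkj]
      have : q * X k - aeval (R := ℚ) u (q * X k) =
          (q - aeval (R := ℚ) u q) * X k + aeval (R := ℚ) u q * (X k - aeval (R := ℚ) u (X k)) := by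
        rw [map_mul]; ring
      rw [this]
      exact Ideal.add_mem _ (Ideal.mul_mem_right _ _ hq) (Ideal.mul_mem_left _ _ hXk)
  have h0 : aeval (R := ℚ) u p = 0 := by
    have h2 : aeval (R := ℚ) u (rename (⇑(Equiv.swap i j)) p) = aeval (R := ℚ) u p := by
      rw [aeval_rename]
      have hcomp : u ∘ ⇑(Equiv.swap i j) = u := by
        funext k
        rcases eq_or_ne k i with rfl | hki
        · simp [hu, Equiv.swap_apply_left, hij.symm, hij]
        · rcases eq_or_ne k j with rfl | hkj
          · simp [hu, Equiv.swap_apply_right]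
          · simp [hu, Equiv.swap_apply_of_ne_of_ne hki hkj, hkj]
      rw [hcomp]
    rw [h, map_neg] at h2
    have h3 : (2 : MvPolynomial σ ℚ) * aeval (R := ℚ) u p = 0 := by
      linear_combination -h2
    rcases mul_eq_zero.mp h3 with h4 | h4
    · exact absurd h4 two_ne_zero
    · exact h4
  have := hmem p
  rw [h0, sub_zero] at this
  exact (Ideal.mem_span_singleton.mp this)

end SwapDvd

/-- rename by a bijection preserves total degree -/
lemma totalDegree_rename_perm {m : ℕ} (w : Equiv.Perm (Fin m)) (p : MvPolynomial (Fin m) ℚ) :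
    (rename (⇑w) p).totalDegree = p.totalDegree := by
  refine le_antisymm (totalDegree_rename_le _ _) ?_
  have : p = rename (⇑w⁻¹) (rename (⇑w) p) := by
    rw [rename_rename]
    have : (⇑w⁻¹ ∘ ⇑w) = id := by funext x; simp
    rw [this, rename_id, AlgHom.id_apply]
  conv_lhs => rw [this]
  exact totalDegree_rename_le _ _

/-- nested product over `Ioi` equals product over the set of ordered pairs -/
lemma prod_Ioi_eq_prod_pairs {M : Type*} [CommMonoid M] (m : ℕ) (f : Fin m → Fin m → M) :
    (∏ i : Fin m, ∏ j ∈ Finset.Ioi i, f i j) =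
      ∏ p ∈ Finset.univ.filter (fun p : Fin m × Fin m => p.1 < p.2), f p.1 p.2 := by
  rw [Finset.prod_sigma']
  exact Finset.prod_bij (fun x _ => (x.1, x.2))
    (by intro x hx; simp only [Finset.mem_sigma, Finset.mem_Ioi] at hx
        simp [hx.2])
    (by intro x hx y hy hxy
        simp only [Prod.mk.injEq] at hxy
        exact Sigma.ext hxy.1 (heq_of_eq hxy.2))
    (by intro p hp
        simp only [Finset.mem_filter] at hp
        exact ⟨⟨p.1, p.2⟩, by simp [hp.2], rfl⟩)
    (fun _ _ => rfl)

section Vandermonde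

open Equiv

/-- the sign of a permutation as a polynomial constant -/
noncomputable def eps {m : ℕ} (w : Equiv.Perm (Fin m)) : MvPolynomial (Fin m) ℚ :=
  (((Equiv.Perm.sign w : ℤˣ) : ℤ) : MvPolynomial (Fin m) ℚ)

lemma eps_mul_self {m : ℕ} (w : Equiv.Perm (Fin m)) : eps w * eps w = 1 := by
  unfold eps
  rw [← Int.cast_mul, ← Units.val_mul, Int.units_mul_self]
  simp

lemma rename_eps {m : ℕ} (τ w : Equiv.Perm (Fin m)) :
    rename (⇑τ) (eps w) = eps w := by
  unfold eps
  exact map_intCast (rename (R := ℚ) (⇑τ)) _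

lemma eps_swap_mul {m : ℕ} {a b : Fin m} (hab : a ≠ b) (w : Equiv.Perm (Fin m)) :
    eps (Equiv.swap a b * w) = -eps w := by
  unfold eps
  rw [Equiv.Perm.sign_mul, Equiv.Perm.sign_swap hab]
  push_cast
  ring

lemma totalDegree_eps_mul {m : ℕ} (w : Equiv.Perm (Fin m)) (x : MvPolynomial (Fin m) ℚ) :
    (eps w * x).totalDegree = x.totalDegree := by
  unfold eps
  rcases Int.units_eq_one_or (Equiv.Perm.sign w) with h1 | h1 <;> rw [h1]
  · simp
  · simp [totalDegree_neg]

/-- The Vandermonde product over ordered pairs. -/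
noncomputable def VdM (m : ℕ) : MvPolynomial (Fin (m + 1)) ℚ :=
  ∏ p ∈ Finset.univ.filter (fun p : Fin (m + 1) × Fin (m + 1) => p.1 < p.2), (X p.2 - X p.1)

lemma VdM_eq_det (m : ℕ) :
    VdM m = (Matrix.vandermonde (fun i : Fin (m + 1) => (X i : MvPolynomial (Fin (m + 1)) ℚ))).det := by
  rw [Matrix.det_vandermonde, prod_Ioi_eq_prod_pairs]
  rfl

lemma rename_VdM (m : ℕ) (w : Equiv.Perm (Fin (m + 1))) :
    rename (⇑w) (VdM m) = eps w * VdM m := by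
  rw [VdM_eq_det]
  have h1 : rename (⇑w) ((Matrix.vandermonde
      (fun i : Fin (m + 1) => (X i : MvPolynomial (Fin (m + 1)) ℚ))).det) =
      ((Matrix.vandermonde (fun i : Fin (m + 1) =>
        (X i : MvPolynomial (Fin (m + 1)) ℚ))).submatrix (⇑w) id).det := by
    rw [AlgHom.map_det]
    congr 1
    ext i k
    simp [Matrix.vandermonde, map_pow]
  rw [h1, Matrix.det_permute, ← VdM_eq_det]
  unfold eps
  norm_cast

end Vandermonde

lemma fac_not_dvd {m : ℕ} {p q : Fin m × Fin m} (hp : p.1 < p.2) (hq : q.1 < q.2)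
    (hpq : p ≠ q) : ¬ ((X p.2 - X p.1 : MvPolynomial (Fin m) ℚ) ∣ (X q.2 - X q.1)) := by
  rintro ⟨c, hc⟩
  have hcase : (q.1 ≠ p.1 ∧ q.1 ≠ p.2) ∨ (q.2 ≠ p.1 ∧ q.2 ≠ p.2) := by
    rcases eq_or_ne q.1 p.1 with e1 | e1
    · right
      refine ⟨?_, ?_⟩
      · rw [← e1]; exact hq.ne'
      · intro e2; exact hpq ((Prod.ext e1 e2).symm)
    · rcases eq_or_ne q.1 p.2 with e2 | e2
      · right
        refine ⟨fun e3 => ?_, fun e3 => ?_⟩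
        · rw [e2, e3] at hq; exact absurd (lt_trans hp hq) (lt_irrefl _)
        · rw [e2, e3] at hq; exact absurd hq (lt_irrefl _)
      · left; exact ⟨e1, e2⟩
  rcases hcase with ⟨h1, h2⟩ | ⟨h1, h2⟩
  · set v : Fin m → ℚ := fun x => if x = q.1 then 0 else 1 with hv
    have he := congrArg (eval v) hc
    rw [map_mul] at he
    have e1 : eval v (X q.2 - X q.1 : MvPolynomial (Fin m) ℚ) = 1 := by
      simp [hv, hq.ne']
    have e2 : eval v (X p.2 - X p.1 : MvPolynomial (Fin m) ℚ) = 0 := by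
      simp [hv, h1.symm, h2.symm]  -- needs p.2 ≠ q.1, p.1 ≠ q.1
    rw [e1, e2, zero_mul] at he
    exact one_ne_zero he
  · set v : Fin m → ℚ := fun x => if x = q.2 then 0 else 1 with hv
    have he := congrArg (eval v) hc
    rw [map_mul] at he
    have e1 : eval v (X q.2 - X q.1 : MvPolynomial (Fin m) ℚ) = -1 := by
      simp [hv, hq.ne]
    have e2 : eval v (X p.2 - X p.1 : MvPolynomial (Fin m) ℚ) = 0 := by
      simp [hv, h1.symm, h2.symm]
    rw [e1, e2, zero_mul] at he
    norm_num at he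

/-- The divided symmetrization `⟨f⟩ = Σ_{w ∈ S_{n+1}} w( f / ((λ_1-λ_2)⋯(λ_n-λ_{n+1})) )`,
an element of the field of rational functions in `λ_1,…,λ_{n+1}` over `ℚ`. The symmetric
group acts by permuting the variables. -/
noncomputable def divSym (n : ℕ) (f : MvPolynomial (Fin (n + 1)) ℚ) :
    FractionRing (MvPolynomial (Fin (n + 1)) ℚ) :=
  ∑ w : Equiv.Perm (Fin (n + 1)),
    algebraMap (MvPolynomial (Fin (n + 1)) ℚ) (FractionRing (MvPolynomial (Fin (n + 1)) ℚ))
        (rename (⇑w) f) /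
      algebraMap (MvPolynomial (Fin (n + 1)) ℚ) (FractionRing (MvPolynomial (Fin (n + 1)) ℚ))
        (rename (⇑w) (∏ i : Fin n, (X i.castSucc - X i.succ)))

theorem stmt2 (n : ℕ) (f : MvPolynomial (Fin (n + 1)) ℚ) :
    (f.totalDegree ≤ n →
      ∃ c : ℚ, divSym n f =
        algebraMap (MvPolynomial (Fin (n + 1)) ℚ) (FractionRing (MvPolynomial (Fin (n + 1)) ℚ))
          (C c)) ∧
    (f.totalDegree < n → divSym n f = 0) := by
  classical
  set φ : MvPolynomial (Fin (n + 1)) ℚ →+* FractionRing (MvPolynomial (Fin (n + 1)) ℚ) := algebraMap (MvPolynomial (Fin (n + 1)) ℚ)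
    (FractionRing (MvPolynomial (Fin (n + 1)) ℚ)) with hφdef
  set D := ∏ i : Fin n, (X i.castSucc - X i.succ : MvPolynomial (Fin (n + 1)) ℚ) with hDdef
  set S := Finset.univ.filter (fun p : Fin (n + 1) × Fin (n + 1) => p.1 < p.2) with hSdef
  set A := Finset.image (fun i : Fin n =>
    ((i.castSucc : Fin (n + 1)), (i.succ : Fin (n + 1)))) Finset.univ with hAdef
  set g := ∏ p ∈ S \ A, (X p.2 - X p.1 : MvPolynomial (Fin (n + 1)) ℚ) with hgdef
  set gg := ((-1 : MvPolynomial (Fin (n + 1)) ℚ) ^ n) * g with hggdef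
  set N := ∑ w : Equiv.Perm (Fin (n + 1)), eps w * rename (⇑w) (f * gg) with hNdef
  have hφinj : Function.Injective φ := IsFractionRing.injective _ _
  have hXne : ∀ {a b : Fin (n + 1)}, a ≠ b →
      (X a - X b : MvPolynomial (Fin (n + 1)) ℚ) ≠ 0 := by
    intro a b hab
    exact sub_ne_zero.mpr (fun h => hab (MvPolynomial.X_injective h))
  have hVS : VdM n = ∏ p ∈ S, (X p.2 - X p.1 : MvPolynomial (Fin (n + 1)) ℚ) := by
    rw [hSdef]; rfl
  have hV0 : VdM n ≠ 0 := by
    rw [hVS]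
    refine Finset.prod_ne_zero_iff.mpr (fun p hpS => ?_)
    exact hXne ((Finset.mem_filter.mp hpS).2.ne')
  have hD0 : D ≠ 0 :=
    Finset.prod_ne_zero_iff.mpr fun i _ => hXne (Fin.castSucc_lt_succ (i := i)).ne
  have hinj : Function.Injective (fun i : Fin n =>
      ((i.castSucc : Fin (n + 1)), (i.succ : Fin (n + 1)))) := by
    intro a b hab
    exact Fin.succ_injective _ (congrArg Prod.snd hab)
  have hAS : A ⊆ S := by
    intro p hp
    rw [hAdef] at hp
    obtain ⟨i, -, rfl⟩ := Finset.mem_image.mp hp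
    rw [hSdef]
    simp [Fin.castSucc_lt_succ (i := i)]
  have hcardA : A.card = n := by
    rw [hAdef, Finset.card_image_of_injective _ hinj, Finset.card_univ, Fintype.card_fin]
  have hSn : n ≤ S.card := by
    have := Finset.card_le_card hAS
    omega
  have hDg : D * gg = VdM n := by
    have h2 : ∏ p ∈ A, (X p.2 - X p.1 : MvPolynomial (Fin (n + 1)) ℚ) =
        ∏ i : Fin n, (X i.succ - X i.castSucc : MvPolynomial (Fin (n + 1)) ℚ) := by
      rw [hAdef, Finset.prod_image (fun a _ b _ hab => hinj hab)]
    have h3 : VdM n = g * ∏ p ∈ A, (X p.2 - X p.1 : MvPolynomial (Fin (n + 1)) ℚ) := by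
      rw [hVS, hgdef, Finset.prod_sdiff hAS]
    have h4 : ((-1 : MvPolynomial (Fin (n + 1)) ℚ) ^ n) * D =
        ∏ i : Fin n, (X i.succ - X i.castSucc : MvPolynomial (Fin (n + 1)) ℚ) := by
      have h5 : ((-1 : MvPolynomial (Fin (n + 1)) ℚ) ^ n) =
          ∏ _i : Fin n, (-1 : MvPolynomial (Fin (n + 1)) ℚ) := by
        rw [Finset.prod_const, Finset.card_univ, Fintype.card_fin]
      rw [h5, hDdef, ← Finset.prod_mul_distrib]
      exact Finset.prod_congr rfl (fun i _ => by ring)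
    calc D * gg = ((-1 : MvPolynomial (Fin (n + 1)) ℚ) ^ n * D) * g := by
          rw [hggdef]; ring
      _ = VdM n := by rw [h4, h3, ← h2]; ring
  have hterm : ∀ w : Equiv.Perm (Fin (n + 1)),
      rename (⇑w) D * (eps w * rename (⇑w) gg) = VdM n := by
    intro w
    have h1 : rename (⇑w) D * (eps w * rename (⇑w) gg) =
        eps w * rename (⇑w) (D * gg) := by
      simp only [map_mul, map_pow, map_neg, map_one]; ring
    rw [h1, hDg, rename_VdM, ← mul_assoc, eps_mul_self, one_mul]
  have hφV : φ (VdM n) ≠ 0 := fun h => hV0 (hφinj (by rw [h, map_zero]))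
  have hdiv : divSym n f = φ N / φ (VdM n) := by
    unfold divSym
    rw [← hφdef, ← hDdef, hNdef, map_sum, Finset.sum_div]
    refine Finset.sum_congr rfl (fun w _ => ?_)
    have hrenD : rename (⇑w) D ≠ 0 := fun h0 =>
      hD0 ((rename_injective _ w.injective) (by rw [h0, map_zero]))
    have hwD : φ (rename (⇑w) D) ≠ 0 := fun h => hrenD (hφinj (by rw [h, map_zero]))
    rw [div_eq_div_iff hwD hφV, ← map_mul, ← map_mul]
    congr 1
    rw [← hterm w]
    simp only [map_mul, map_pow, map_neg, map_one]
    ring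
  have hanti : ∀ a b : Fin (n + 1), a ≠ b →
      rename (⇑(Equiv.swap a b)) N = -N := by
    intro a b hab
    rw [hNdef, map_sum, ← Finset.sum_neg_distrib]
    refine Fintype.sum_equiv (Equiv.mulLeft (Equiv.swap a b)) _ _ (fun w => ?_)
    simp only [Equiv.coe_mulLeft]
    rw [map_mul, rename_eps, rename_rename, eps_swap_mul hab, Equiv.Perm.coe_mul]
    ring
  have hdvd : VdM n ∣ N := by
    rw [hVS]
    refine prod_primes_dvd' _ _ N (fun p hpS => ?_) (fun p hpS q hqS hpq => ?_)
      (fun p hpS => ?_)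
    · exact prime_X_sub_X ((Finset.mem_filter.mp hpS).2.ne')
    · exact fac_not_dvd (Finset.mem_filter.mp hpS).2
        (Finset.mem_filter.mp hqS).2 hpq
    · have hne : p.2 ≠ p.1 := (Finset.mem_filter.mp hpS).2.ne'
      exact dvd_of_swap_antisymm hne (hanti p.2 p.1 hne)
  obtain ⟨Q, hQ⟩ := hdvd
  have hVhom : (VdM n).IsHomogeneous S.card := by
    rw [hVS]
    have hc : ∀ p ∈ S, (X p.2 - X p.1 : MvPolynomial (Fin (n + 1)) ℚ).IsHomogeneous 1 :=
      fun p _ => (isHomogeneous_X _ _).sub (isHomogeneous_X _ _)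
    have h := MvPolynomial.IsHomogeneous.prod S
      (fun p => (X p.2 - X p.1 : MvPolynomial (Fin (n + 1)) ℚ)) (fun _ => 1) hc
    simpa using h
  have hgle : g.totalDegree ≤ S.card - n := by
    calc g.totalDegree ≤ ∑ p ∈ S \ A,
          (X p.2 - X p.1 : MvPolynomial (Fin (n + 1)) ℚ).totalDegree := by
          rw [hgdef]; exact totalDegree_finset_prod _ _
      _ ≤ ∑ _p ∈ S \ A, 1 := Finset.sum_le_sum (fun p _ =>
          ((isHomogeneous_X _ _).sub (isHomogeneous_X _ _)).totalDegree_le)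
      _ = (S \ A).card := by simp
      _ = S.card - n := by rw [Finset.card_sdiff_of_subset hAS, hcardA]
  have hgg : gg.totalDegree ≤ S.card - n := by
    rcases neg_one_pow_eq_or (MvPolynomial (Fin (n + 1)) ℚ) n with h1 | h1 <;>
      rw [hggdef, h1]
    · rwa [one_mul]
    · rwa [neg_one_mul, totalDegree_neg]
  have hNdeg : N.totalDegree ≤ f.totalDegree + (S.card - n) := by
    rw [hNdef]
    refine le_trans (totalDegree_finset_sum _ _) (Finset.sup_le (fun w _ => ?_))
    rw [totalDegree_eps_mul, totalDegree_rename_perm]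
    exact le_trans (totalDegree_mul _ _) (Nat.add_le_add_left hgg _)
  constructor
  · intro hf
    by_cases hQ0 : Q = 0
    · refine ⟨0, ?_⟩
      rw [hdiv, hQ, hQ0, mul_zero, map_zero, zero_div, MvPolynomial.C_0, map_zero]
    · have hdeg2 : N.totalDegree = S.card + Q.totalDegree := by
        rw [hQ]; exact totalDegree_mul_homog hVhom hV0 hQ0
      have hQdeg : Q.totalDegree = 0 := by omega
      refine ⟨coeff 0 Q, ?_⟩
      rw [hdiv, hQ, ← eq_C_of_totalDegree_eq_zero hQdeg, map_mul, mul_comm,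
        mul_div_assoc, div_self hφV, mul_one]
  · intro hf
    have hQ0 : Q = 0 := by
      by_contra hQ0
      have hdeg2 : N.totalDegree = S.card + Q.totalDegree := by
        rw [hQ]; exact totalDegree_mul_homog hVhom hV0 hQ0
      omega
    rw [hdiv, hQ, hQ0, mul_zero, map_zero, zero_div]
end

section
/- Let n ≥ 1 and let J_1,…,J_{n−1} ⊆ [n] be subsets. The following three conditions are equivalent: (1) for every nonempty set of distinct indices i_1,…,i_k ∈ {1,…,n−1}, one has |J_{i_1} ∪ ⋯ ∪ J_{i_k}| ≥ k+1; (2) for every j ∈ [n] there is a system of distinct representatives of J_1,…,J_{n−1} avoiding j, i.e., an injective map f : {1,…,n−1} → [n] with f(i) ∈ J_i and f(i) ≠ j for all i; (3) there exist two-element subsets {a_i, b_i} ⊆ J_i (with a_i ≠ b_i) for i = 1,…,n−1 such that the n−1 edges {a_1,b_1},…,{a_{n−1},b_{n−1}} form a spanning tree of the complete graph on the vertex set [n]. -/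
open Finset SimpleGraph

namespace Stmt5Aux

variable {V : Type*} [DecidableEq V] {G : SimpleGraph V}

lemma dist_le_of_mem_support {j w : V} (p : G.Walk j w) {x : V} (hx : x ∈ p.support) :
    G.dist j x ≤ p.length :=
  le_trans (SimpleGraph.dist_le (p.takeUntil x hx)) (SimpleGraph.Walk.length_takeUntil_le p hx)

lemma far_unique (hT : G.IsTree) {j v u u' : V}
    (h : G.Adj u v) (h' : G.Adj u' v)
    (hu : G.dist j u < G.dist j v) (hu' : G.dist j u' < G.dist j v) : u = u' := by
  obtain ⟨p, hp, hl⟩ := hT.isConnected.exists_path_of_dist j u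
  obtain ⟨p', hp', hl'⟩ := hT.isConnected.exists_path_of_dist j u'
  have hvp : v ∉ p.support := by
    intro hv
    have := dist_le_of_mem_support p hv
    omega
  have hvp' : v ∉ p'.support := by
    intro hv
    have := dist_le_of_mem_support p' hv
    omega
  have hq : (Walk.cons h.symm p.reverse).IsPath := by
    rw [Walk.cons_isPath_iff]
    exact ⟨hp.reverse, by simpa using hvp⟩
  have hq' : (Walk.cons h'.symm p'.reverse).IsPath := by
    rw [Walk.cons_isPath_iff]
    exact ⟨hp'.reverse, by simpa using hvp'⟩
  obtain ⟨w, -, huniq⟩ := hT.existsUnique_path v j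
  have heq : Walk.cons h.symm p.reverse = Walk.cons h'.symm p'.reverse :=
    (huniq _ hq).trans (huniq _ hq').symm
  have h2 := congrArg (fun w : G.Walk v j => w.support.tail.head?) heq
  simp only [Walk.support_cons, List.tail_cons] at h2
  rw [p.reverse.support_eq_cons, p'.reverse.support_eq_cons] at h2
  simpa using h2

lemma adj_dist_ne (hT : G.IsTree) (j : V) {x y : V} (hxy : G.Adj x y) :
    G.dist j x ≠ G.dist j y := by
  intro hd
  obtain ⟨p, hp, hl⟩ := hT.isConnected.exists_path_of_dist j x
  obtain ⟨q, hq, hql⟩ := hT.isConnected.exists_path_of_dist j y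
  have hyp : y ∉ p.support := by
    intro hy
    have h1 : G.dist j y ≤ (p.takeUntil y hy).length := SimpleGraph.dist_le _
    have h2 := SimpleGraph.Walk.length_takeUntil_le p hy
    have h4 := congrArg Walk.length (p.take_spec hy)
    rw [Walk.length_append] at h4
    have h5 : (p.dropUntil y hy).length = 0 := by omega
    exact hxy.ne' (Walk.eq_of_length_eq_zero h5)
  have hq2 : (Walk.cons hxy.symm p.reverse).IsPath := by
    rw [Walk.cons_isPath_iff]
    exact ⟨hp.reverse, by simpa using hyp⟩
  obtain ⟨w, -, huniq⟩ := hT.existsUnique_path y j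
  have heq := (huniq _ hq2).trans (huniq _ hq.reverse).symm
  have hle := congrArg Walk.length heq
  simp only [Walk.length_cons, Walk.length_reverse] at hle
  omega

lemma tree_of_two (n : ℕ) (J : Fin n → Finset (Fin (n + 1)))
    (h1 : ∀ S : Finset (Fin n), S.Nonempty → S.card + 1 ≤ (S.biUnion J).card)
    (a b : Fin n → Fin (n + 1)) (hne : ∀ i, a i ≠ b i) (hJ : ∀ i, J i = {a i, b i}) :
    (SimpleGraph.fromEdgeSet {e | ∃ i : Fin n, e = s(a i, b i)}).IsTree := by
  classical
  set G := SimpleGraph.fromEdgeSet {e | ∃ i : Fin n, e = s(a i, b i)} with hG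
  have hadj : ∀ i, G.Adj (a i) (b i) := fun i => by
    rw [hG, fromEdgeSet_adj]
    exact ⟨⟨i, rfl⟩, hne i⟩
  rw [isTree_iff]
  constructor
  · -- Connected
    rw [connected_iff]
    refine ⟨fun v w => ?_, inferInstance⟩
    set K : Finset (Fin (n + 1)) := univ.filter (fun z => G.Reachable v z) with hK
    have hvK : v ∈ K := by
      simp only [hK, mem_filter, mem_univ, true_and]
      exact Reachable.refl v
    have hKadj : ∀ i, a i ∈ K ↔ b i ∈ K := fun i => by
      simp only [hK, mem_filter, mem_univ, true_and]
      exact ⟨fun h => h.trans (hadj i).reachable, fun h => h.trans (hadj i).symm.reachable⟩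
    set S : Finset (Fin n) := univ.filter (fun i => a i ∈ K) with hS
    by_cases hwK : w ∈ K
    · simp only [hK, mem_filter, mem_univ, true_and] at hwK
      exact hwK
    · exfalso
      by_cases hn : n = 0
      · subst hn
        have hwv : w = v := by
          have h1 := w.2
          have h2 := v.2
          exact Fin.ext (by omega)
        exact hwK (hwv ▸ hvK)
      · rcases Finset.eq_empty_or_nonempty Sᶜ with hSc | hSc
        · -- S = univ : everything in K, but w ∉ K
          have hSu : S = univ := by
            rwa [← Finset.compl_eq_empty_iff]
          haveI : Nonempty (Fin n) := ⟨⟨0, Nat.pos_of_ne_zero hn⟩⟩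
          have hsub : univ.biUnion J ⊆ K := by
            intro z hz
            obtain ⟨i, _, hzi⟩ := Finset.mem_biUnion.1 hz
            rw [hJ i, mem_insert, mem_singleton] at hzi
            have hai : a i ∈ K := by
              have hiS : i ∈ S := hSu ▸ mem_univ i
              simpa [hS] using hiS
            rcases hzi with rfl | rfl
            · exact hai
            · exact (hKadj i).1 hai
          have h2 := h1 univ Finset.univ_nonempty
          rw [card_univ, Fintype.card_fin] at h2
          have h3 : K ⊆ univ.erase w := fun z hz =>
            mem_erase.2 ⟨fun hzw => hwK (hzw ▸ hz), mem_univ z⟩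
          have h4 := card_le_card h3
          rw [card_erase_of_mem (mem_univ w), card_univ, Fintype.card_fin] at h4
          have h5 := card_le_card hsub
          omega
        · -- Sᶜ nonempty
          have hKcard : S.card + 1 ≤ K.card := by
            rcases S.eq_empty_or_nonempty with he | hSne
            · rw [he, card_empty]
              exact Finset.card_pos.2 ⟨v, hvK⟩
            · refine le_trans (h1 S hSne) (card_le_card ?_)
              intro z hz
              obtain ⟨i, hi, hzi⟩ := Finset.mem_biUnion.1 hz
              rw [hJ i, mem_insert, mem_singleton] at hzi
              have hai : a i ∈ K := by simpa [hS] using hi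
              rcases hzi with rfl | rfl
              · exact hai
              · exact (hKadj i).1 hai
          have hKccard : Sᶜ.card + 1 ≤ Kᶜ.card := by
            refine le_trans (h1 Sᶜ hSc) (card_le_card ?_)
            intro z hz
            obtain ⟨i, hi, hzi⟩ := Finset.mem_biUnion.1 hz
            rw [hJ i, mem_insert, mem_singleton] at hzi
            have hai : a i ∉ K := by
              rw [Finset.mem_compl] at hi
              simpa [hS] using hi
            rw [Finset.mem_compl]
            rcases hzi with rfl | rfl
            · exact hai
            · exact fun hb => hai ((hKadj i).2 hb)
          have hc1 : K.card + Kᶜ.card = n + 1 := by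
            rw [Finset.card_add_card_compl, Fintype.card_fin]
          have hc2 : S.card + Sᶜ.card = n := by
            rw [Finset.card_add_card_compl, Fintype.card_fin]
          omega
  · -- Acyclic
    intro v c hc
    have hcl := hc.three_le_length
    have hnodup := hc.edges_nodup
    set S : Finset (Fin n) := univ.filter (fun i => s(a i, b i) ∈ c.edges) with hS
    have hedges : c.edges.toFinset ⊆ S.image (fun i => s(a i, b i)) := by
      intro e he
      rw [List.mem_toFinset] at he
      have he2 : e ∈ G.edgeSet := c.edges_subset_edgeSet he
      rw [hG, edgeSet_fromEdgeSet, Set.mem_diff, Set.mem_setOf_eq] at he2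
      obtain ⟨⟨i, rfl⟩, -⟩ := he2
      exact mem_image_of_mem _ (mem_filter.2 ⟨mem_univ i, he⟩)
    have hScard : c.length ≤ S.card := by
      calc c.length = c.edges.length := (Walk.length_edges c).symm
        _ = c.edges.toFinset.card := (List.toFinset_card_of_nodup hnodup).symm
        _ ≤ (S.image (fun i => s(a i, b i))).card := card_le_card hedges
        _ ≤ S.card := card_image_le
    cases c with
    | nil => simp at hcl
    | @cons _ x _ hadj' c' =>
      have hsub : S.biUnion J ⊆ c'.support.toFinset := by
        intro z hz
        obtain ⟨i, hiS, hzi⟩ := Finset.mem_biUnion.1 hz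
        have hie : s(a i, b i) ∈ (Walk.cons hadj' c').edges := (mem_filter.1 hiS).2
        rw [hJ i, mem_insert, mem_singleton] at hzi
        have hz' : z ∈ (Walk.cons hadj' c').support := by
          rcases hzi with rfl | rfl
          · exact Walk.fst_mem_support_of_mem_edges _ hie
          · exact Walk.snd_mem_support_of_mem_edges _ hie
        rw [Walk.support_cons] at hz'
        rw [List.mem_toFinset]
        rcases List.mem_cons.1 hz' with rfl | hmem
        · exact Walk.end_mem_support c'
        · exact hmem
      have hSne : S.Nonempty := Finset.card_pos.1 (by omega)
      have h2 := h1 S hSne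
      have h3 : (S.biUnion J).card ≤ c'.support.toFinset.card := card_le_card hsub
      have h4 : c'.support.toFinset.card ≤ c'.support.length := c'.support.toFinset_card_le
      have h5 : c'.support.length = c'.length + 1 := Walk.length_support c'
      have h6 : (Walk.cons hadj' c').length = c'.length + 1 := Walk.length_cons _ _
      omega

lemma case_two (n : ℕ) (J : Fin n → Finset (Fin (n + 1)))
    (h1 : ∀ S : Finset (Fin n), S.Nonempty → S.card + 1 ≤ (S.biUnion J).card)
    (hle : ∀ i, (J i).card ≤ 2) :
    ∃ a b : Fin n → Fin (n + 1),
      (∀ i, a i ∈ J i ∧ b i ∈ J i ∧ a i ≠ b i) ∧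
      (SimpleGraph.fromEdgeSet {e | ∃ i : Fin n, e = s(a i, b i)}).IsTree := by
  have h2 : ∀ i, (J i).card = 2 := by
    intro i
    have hs := h1 {i} (singleton_nonempty i)
    rw [singleton_biUnion, card_singleton] at hs
    have := hle i
    omega
  have h3 : ∀ i, ∃ x y, x ≠ y ∧ J i = ({x, y} : Finset (Fin (n + 1))) := fun i =>
    Finset.card_eq_two.1 (h2 i)
  choose a b hab hJ using h3
  exact ⟨a, b, fun i => ⟨by rw [hJ i]; simp, by rw [hJ i]; simp, hab i⟩,
    tree_of_two n J h1 a b hab hJ⟩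

lemma shrink (n : ℕ) (J : Fin n → Finset (Fin (n + 1)))
    (h1 : ∀ S : Finset (Fin n), S.Nonempty → S.card + 1 ≤ (S.biUnion J).card)
    (i₀ : Fin n) (h3 : 3 ≤ (J i₀).card) :
    ∃ x ∈ J i₀, ∀ S : Finset (Fin n), S.Nonempty →
      S.card + 1 ≤ (S.biUnion (Function.update J i₀ ((J i₀).erase x))).card := by
  classical
  by_contra hcon
  push_neg at hcon
  have key : ∀ x ∈ J i₀, ∃ T : Finset (Fin n), i₀ ∉ T ∧
      ((J i₀).erase x ∪ T.biUnion J).card ≤ T.card + 1 := by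
    intro x hx
    obtain ⟨S, hSne, hSlt⟩ := hcon x hx
    have hi₀S : i₀ ∈ S := by
      by_contra hi₀
      have heq : S.biUnion (Function.update J i₀ ((J i₀).erase x)) = S.biUnion J := by
        apply biUnion_congr rfl
        intro i hi
        exact Function.update_of_ne (ne_of_mem_of_not_mem hi hi₀) _ _
      rw [heq] at hSlt
      exact absurd (h1 S hSne) (by omega)
    refine ⟨S.erase i₀, notMem_erase _ _, ?_⟩
    have hS : S = insert i₀ (S.erase i₀) := (insert_erase hi₀S).symm
    rw [hS, biUnion_insert, Function.update_self,
      card_insert_of_notMem (notMem_erase _ _)] at hSlt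
    have heq : (S.erase i₀).biUnion (Function.update J i₀ ((J i₀).erase x)) =
        (S.erase i₀).biUnion J := by
      apply biUnion_congr rfl
      intro i hi
      exact Function.update_of_ne (ne_of_mem_erase hi) _ _
    rw [heq] at hSlt
    omega
  obtain ⟨x, hx, y, hy, hxy⟩ := Finset.one_lt_card.1 (by omega : 1 < (J i₀).card)
  obtain ⟨Tx, hTx0, hTx⟩ := key x hx
  obtain ⟨Ty, hTy0, hTy⟩ := key y hy
  set A := (J i₀).erase x ∪ Tx.biUnion J with hA
  set B := (J i₀).erase y ∪ Ty.biUnion J with hB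
  have hunion : (insert i₀ (Tx ∪ Ty)).biUnion J ⊆ A ∪ B := by
    rw [biUnion_insert]
    intro z hz
    rcases mem_union.1 hz with hz | hz
    · by_cases hzx : z = x
      · subst hzx
        exact mem_union_right _ (mem_union_left _ (mem_erase.2 ⟨hxy, hz⟩))
      · exact mem_union_left _ (mem_union_left _ (mem_erase.2 ⟨hzx, hz⟩))
    · obtain ⟨i, hi, hzi⟩ := Finset.mem_biUnion.1 hz
      rcases mem_union.1 hi with hi | hi
      · exact mem_union_left _ (mem_union_right _ (Finset.mem_biUnion.2 ⟨i, hi, hzi⟩))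
      · exact mem_union_right _ (mem_union_right _ (Finset.mem_biUnion.2 ⟨i, hi, hzi⟩))
  have hU := h1 (insert i₀ (Tx ∪ Ty)) (insert_nonempty _ _)
  have hUcard : (insert i₀ (Tx ∪ Ty)).card = (Tx ∪ Ty).card + 1 :=
    card_insert_of_notMem (by simp [hTx0, hTy0])
  have hinter : (Tx ∩ Ty).card + 1 ≤ (A ∩ B).card := by
    rcases (Tx ∩ Ty).eq_empty_or_nonempty with he | hne
    · have hyx : y ∈ (J i₀).erase x := mem_erase.2 ⟨fun h => hxy h.symm, hy⟩
      have hsubAB : ((J i₀).erase x).erase y ⊆ A ∩ B := by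
        intro z hz
        obtain ⟨hzy, hz2⟩ := mem_erase.1 hz
        obtain ⟨hzx, hz3⟩ := mem_erase.1 hz2
        exact mem_inter.2 ⟨mem_union_left _ hz2, mem_union_left _ (mem_erase.2 ⟨hzy, hz3⟩)⟩
      have hc2 : (((J i₀).erase x).erase y).card = (J i₀).card - 2 := by
        rw [card_erase_of_mem hyx, card_erase_of_mem hx]
        omega
      have hc3 := card_le_card hsubAB
      rw [he, card_empty]
      omega
    · calc (Tx ∩ Ty).card + 1 ≤ ((Tx ∩ Ty).biUnion J).card := h1 _ hne
        _ ≤ (A ∩ B).card := by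
            apply card_le_card
            apply subset_inter
            · exact le_trans (biUnion_subset_biUnion_of_subset_left J inter_subset_left)
                subset_union_right
            · exact le_trans (biUnion_subset_biUnion_of_subset_left J inter_subset_right)
                subset_union_right
  have hcup : (A ∪ B).card + (A ∩ B).card = A.card + B.card := card_union_add_card_inter A B
  have hTcup : (Tx ∪ Ty).card + (Tx ∩ Ty).card = Tx.card + Ty.card := card_union_add_card_inter _ _
  have hAB : ((insert i₀ (Tx ∪ Ty)).biUnion J).card ≤ (A ∪ B).card := card_le_card hunion
  omega

lemma exists_tree : ∀ (N n : ℕ) (J : Fin n → Finset (Fin (n + 1))),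
    (∑ i, (J i).card) ≤ N →
    (∀ S : Finset (Fin n), S.Nonempty → S.card + 1 ≤ (S.biUnion J).card) →
    ∃ a b : Fin n → Fin (n + 1),
      (∀ i, a i ∈ J i ∧ b i ∈ J i ∧ a i ≠ b i) ∧
      (SimpleGraph.fromEdgeSet {e | ∃ i : Fin n, e = s(a i, b i)}).IsTree := by
  intro N
  induction N with
  | zero =>
    intro n J hsum h1
    apply case_two n J h1
    intro i
    have hsl : (J i).card ≤ ∑ i, (J i).card := by
      exact Finset.single_le_sum (f := fun i => (J i).card) (fun _ _ => Nat.zero_le _) (mem_univ i)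
    omega
  | succ N ih =>
    intro n J hsum h1
    by_cases hle : ∀ i, (J i).card ≤ 2
    · exact case_two n J h1 hle
    · push_neg at hle
      obtain ⟨i₀, hi₀⟩ := hle
      obtain ⟨x, hx, h1'⟩ := shrink n J h1 i₀ (by omega)
      classical
      have hsum' : (∑ i, ((Function.update J i₀ ((J i₀).erase x)) i).card) ≤ N := by
        have hstep : ∑ i, ((Function.update J i₀ ((J i₀).erase x)) i).card
            = ((J i₀).erase x).card + ∑ i ∈ univ.erase i₀, (J i).card := by
          rw [← Finset.add_sum_erase _ (fun i => ((Function.update J i₀ ((J i₀).erase x)) i).card)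
            (mem_univ i₀), Function.update_self]
          congr 1
          refine Finset.sum_congr rfl fun i hi => ?_
          rw [Function.update_of_ne (ne_of_mem_erase hi)]
        have hadd : (J i₀).card + ∑ i ∈ univ.erase i₀, (J i).card = ∑ i, (J i).card := by
          exact Finset.add_sum_erase _ (fun i => (J i).card) (mem_univ i₀)
        rw [hstep, card_erase_of_mem hx]
        omega
      obtain ⟨a, b, hab, hT⟩ := ih n _ hsum' h1'
      refine ⟨a, b, fun i => ?_, hT⟩
      obtain ⟨ha, hb, hne⟩ := hab i
      by_cases hii : i = i₀
      · subst hii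
        rw [Function.update_self] at ha hb
        exact ⟨mem_of_mem_erase ha, mem_of_mem_erase hb, hne⟩
      · rw [Function.update_of_ne hii] at ha hb
        exact ⟨ha, hb, hne⟩

lemma three_to_two (n : ℕ) (J : Fin n → Finset (Fin (n + 1)))
    (a b : Fin n → Fin (n + 1))
    (hab : ∀ i, a i ∈ J i ∧ b i ∈ J i ∧ a i ≠ b i)
    (hT : (SimpleGraph.fromEdgeSet {e | ∃ i : Fin n, e = s(a i, b i)}).IsTree)
    (j : Fin (n + 1)) :
    ∃ f : Fin n → Fin (n + 1), Function.Injective f ∧ ∀ i, f i ∈ J i ∧ f i ≠ j := by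
  classical
  set G := SimpleGraph.fromEdgeSet {e | ∃ i : Fin n, e = s(a i, b i)} with hG
  have hadj : ∀ i, G.Adj (a i) (b i) := fun i => by
    rw [hG, fromEdgeSet_adj]
    exact ⟨⟨i, rfl⟩, (hab i).2.2⟩
  letI : Fintype G.edgeSet := Fintype.ofFinite _
  have hcard : G.edgeFinset.card + 1 = n + 1 := by
    have := hT.card_edgeFinset
    rwa [Fintype.card_fin] at this
  have hedge : G.edgeFinset = univ.image (fun i => s(a i, b i)) := by
    ext e
    simp only [mem_edgeFinset, mem_image, mem_univ, true_and]
    rw [hG, edgeSet_fromEdgeSet, Set.mem_diff, Set.mem_setOf_eq]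
    constructor
    · rintro ⟨⟨i, rfl⟩, -⟩
      exact ⟨i, rfl⟩
    · rintro ⟨i, rfl⟩
      refine ⟨⟨i, rfl⟩, ?_⟩
      rw [Sym2.mem_diagSet, Sym2.isDiag_iff_proj_eq]
      exact (hab i).2.2
  have hinj : Function.Injective (fun i : Fin n => s(a i, b i)) := by
    have hc1 : (univ.image (fun i : Fin n => s(a i, b i))).card = n := by
      rw [← hedge]; omega
    have hc2 : Set.InjOn (fun i : Fin n => s(a i, b i)) ↑(univ : Finset (Fin n)) :=
      Finset.card_image_iff.1 (by rw [hc1, card_univ, Fintype.card_fin])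
    intro i i' h
    exact hc2 (by simp) (by simp) h
  have hdists : ∀ i, G.dist j (a i) ≠ G.dist j (b i) := fun i => adj_dist_ne hT j (hadj i)
  set f : Fin n → Fin (n + 1) := fun i => if G.dist j (a i) < G.dist j (b i) then b i else a i
    with hf
  have hkey : ∀ i, ∃ u, G.Adj u (f i) ∧ G.dist j u < G.dist j (f i) ∧ s(u, f i) = s(a i, b i) := by
    intro i
    by_cases hlt : G.dist j (a i) < G.dist j (b i)
    · refine ⟨a i, ?_, ?_, ?_⟩ <;> simp [hf, hlt, hadj i]
    · have hlt' : G.dist j (b i) < G.dist j (a i) :=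
        lt_of_le_of_ne (not_lt.1 hlt) (Ne.symm (hdists i))
      refine ⟨b i, ?_, ?_, ?_⟩
      · simp only [hf, if_neg hlt]
        exact (hadj i).symm
      · simp only [hf, if_neg hlt]
        exact hlt'
      · simp only [hf, if_neg hlt]
        exact Sym2.eq_swap
  refine ⟨f, ?_, ?_⟩
  · intro i i' hii
    obtain ⟨u, hu, hud, hue⟩ := hkey i
    obtain ⟨u', hu', hud', hue'⟩ := hkey i'
    rw [hii] at hu hud hue
    have huu : u = u' := far_unique hT hu hu' hud hud'
    have : s(a i, b i) = s(a i', b i') := by rw [← hue, ← hue', huu]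
    exact hinj this
  · intro i
    constructor
    · by_cases hlt : G.dist j (a i) < G.dist j (b i)
      · simp only [hf, if_pos hlt]
        exact (hab i).2.1
      · simp only [hf, if_neg hlt]
        exact (hab i).1
    · intro hfj
      obtain ⟨u, -, hud, -⟩ := hkey i
      rw [hfj] at hud
      rw [SimpleGraph.dist_self] at hud
      omega

end Stmt5Aux

theorem stmt5 (n : ℕ) (J : Fin n → Finset (Fin (n + 1))) :
    ((∀ S : Finset (Fin n), S.Nonempty → S.card + 1 ≤ (S.biUnion J).card) ↔
      (∀ j : Fin (n + 1), ∃ f : Fin n → Fin (n + 1),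
        Function.Injective f ∧ ∀ i, f i ∈ J i ∧ f i ≠ j)) ∧
    ((∀ j : Fin (n + 1), ∃ f : Fin n → Fin (n + 1),
        Function.Injective f ∧ ∀ i, f i ∈ J i ∧ f i ≠ j) ↔
      (∃ a b : Fin n → Fin (n + 1),
        (∀ i, a i ∈ J i ∧ b i ∈ J i ∧ a i ≠ b i) ∧
        (SimpleGraph.fromEdgeSet {e | ∃ i : Fin n, e = s(a i, b i)}).IsTree)) := by
  classical
  have h12 : (∀ S : Finset (Fin n), S.Nonempty → S.card + 1 ≤ (S.biUnion J).card) →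
      (∀ j : Fin (n + 1), ∃ f : Fin n → Fin (n + 1),
        Function.Injective f ∧ ∀ i, f i ∈ J i ∧ f i ≠ j) := by
    intro h1 j
    have hall : ∀ S : Finset (Fin n), S.card ≤ (S.biUnion (fun i => (J i).erase j)).card := by
      intro S
      rcases S.eq_empty_or_nonempty with rfl | hS
      · simp
      · have h := h1 S hS
        have hsub : S.biUnion J ⊆ insert j (S.biUnion fun i => (J i).erase j) := by
          intro z hz
          obtain ⟨i, hi, hzi⟩ := Finset.mem_biUnion.1 hz
          by_cases hzj : z = j
          · subst hzj; exact Finset.mem_insert_self _ _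
          · exact Finset.mem_insert_of_mem
              (Finset.mem_biUnion.2 ⟨i, hi, Finset.mem_erase.2 ⟨hzj, hzi⟩⟩)
        have h2 := Finset.card_le_card hsub
        have h3 := Finset.card_insert_le j (S.biUnion fun i => (J i).erase j)
        omega
    obtain ⟨f, hfi, hf⟩ := (Finset.all_card_le_biUnion_card_iff_exists_injective _).1 hall
    exact ⟨f, hfi, fun i => ⟨Finset.mem_of_mem_erase (hf i), Finset.ne_of_mem_erase (hf i)⟩⟩
  have h21 : (∀ j : Fin (n + 1), ∃ f : Fin n → Fin (n + 1),
      Function.Injective f ∧ ∀ i, f i ∈ J i ∧ f i ≠ j) →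
      (∀ S : Finset (Fin n), S.Nonempty → S.card + 1 ≤ (S.biUnion J).card) := by
    intro h2 S hS
    obtain ⟨i₀, hi₀⟩ := hS
    obtain ⟨f₀, -, hf₀⟩ := h2 ⟨0, Nat.succ_pos n⟩
    have hj : f₀ i₀ ∈ S.biUnion J := Finset.mem_biUnion.2 ⟨i₀, hi₀, (hf₀ i₀).1⟩
    obtain ⟨f, hfi, hf⟩ := h2 (f₀ i₀)
    have hsub : S.image f ⊆ (S.biUnion J).erase (f₀ i₀) := by
      intro z hz
      obtain ⟨i, hi, rfl⟩ := Finset.mem_image.1 hz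
      exact Finset.mem_erase.2 ⟨(hf i).2, Finset.mem_biUnion.2 ⟨i, hi, (hf i).1⟩⟩
    have h3 := Finset.card_le_card hsub
    rw [Finset.card_image_of_injective S hfi, Finset.card_erase_of_mem hj] at h3
    have h4 := Finset.card_pos.2 ⟨_, hj⟩
    omega
  refine ⟨⟨h12, h21⟩, ?_, ?_⟩
  · intro h2
    obtain ⟨a, b, hab, hT⟩ :=
      Stmt5Aux.exists_tree (∑ i, (J i).card) n J le_rfl (h21 h2)
    exact ⟨a, b, hab, hT⟩
  · rintro ⟨a, b, hab, hT⟩ j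
    exact Stmt5Aux.three_to_two n J a b hab hT j
end

section
/- Let n ≥ 1 and let x_1 ≥ x_2 ≥ ⋯ ≥ x_n be real numbers. A point (t_1,…,t_n) ∈ ℝ^n belongs to the permutohedron P_n(x_1,…,x_n) if and only if t_1 + ⋯ + t_n = x_1 + ⋯ + x_n and, for every nonempty subset S ⊆ [n], one has Σ_{i ∈ S} t_i ≤ x_1 + x_2 + ⋯ + x_{|S|}. -/
/-!
Every vertex `x ∘ w` satisfies the inequalities, because an antitone sequence has its largest
partial sums over `k` indices on the initial segment of length `k`; and the inequalities cut out a
convex set. Conversely, if `t` satisfies them, test it against any linear functional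
`p ↦ ∑ i, c i * p i`: ordering the coordinates by a permutation `τ` that makes `c ∘ τ` antitone,
summation by parts turns the prefix inequalities into `∑ i, c i * t i ≤ ∑ i, c i * x (τ⁻¹ i)`.
So no functional separates `t` from the finitely many vertices, and Hahn–Banach puts `t` in
their convex hull.
-/

/-- The permutohedron `P_m(x_1,…,x_m)`. -/
def permutohedron (m : ℕ) (x : Fin m → ℝ) : Set (Fin m → ℝ) :=
  convexHull ℝ {p | ∃ w : Equiv.Perm (Fin m), p = fun i => x (w i)}

open Finset

section Majorization

variable {ι R : Type*} [LinearOrder ι] [CommRing R] [LinearOrder R] [IsOrderedRing R]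

theorem sum_mul_le_sum_mul_of_sum_filter_le {s : Finset ι} {a u v : ι → R}
    (ha : AntitoneOn a s) (ha₀ : ∀ i ∈ s, 0 ≤ a i)
    (huv : ∀ i ∈ s, ∑ j ∈ s with j ≤ i, u j ≤ ∑ j ∈ s with j ≤ i, v j) :
    ∑ i ∈ s, a i * u i ≤ ∑ i ∈ s, a i * v i := by
  induction s using Finset.induction_on_max generalizing a with
  | empty => simp
  | insert m s hm ih =>
    have hms : m ∉ s := fun h => lt_irrefl m (hm m h)
    -- Peel off the smallest weight `a m`, which multiplies the full sum.
    have split : ∀ w : ι → R,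
        ∑ i ∈ insert m s, a i * w i = a m * ∑ i ∈ insert m s, w i + ∑ i ∈ s, (a i - a m) * w i := by
      intro w
      simp only [sum_insert hms, sub_mul, sum_sub_distrib, mul_add, ← mul_sum]
      ring
    have hfilter : ∀ i ∈ s, {j ∈ insert m s | j ≤ i} = {j ∈ s | j ≤ i} := fun i hi => by
      rw [filter_insert, if_neg (not_le.mpr (hm i hi))]
    have hfull : {j ∈ insert m s | j ≤ m} = insert m s :=
      filter_true_of_mem fun j hj => (mem_insert.mp hj).elim le_of_eq fun h => (hm j h).le
    rw [split u, split v]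
    gcongr ?_ + ?_
    · refine mul_le_mul_of_nonneg_left ?_ (ha₀ m (mem_insert_self m s))
      simpa only [hfull] using huv m (mem_insert_self m s)
    · refine ih (fun i hi j hj hij => ?_) (fun i hi => ?_) (fun i hi => ?_)
      · exact sub_le_sub_right (ha (mem_insert_of_mem hi) (mem_insert_of_mem hj) hij) _
      · exact sub_nonneg.mpr (ha (mem_insert_of_mem hi) (mem_insert_self m s) (hm i hi).le)
      · simpa only [hfilter i hi] using huv i (mem_insert_of_mem hi)

theorem sum_mul_le_sum_mul_of_sum_filter_le_of_sum_eq {s : Finset ι} {a u v : ι → R}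
    (ha : AntitoneOn a s)
    (huv : ∀ i ∈ s, ∑ j ∈ s with j ≤ i, u j ≤ ∑ j ∈ s with j ≤ i, v j)
    (hsum : ∑ i ∈ s, u i = ∑ i ∈ s, v i) :
    ∑ i ∈ s, a i * u i ≤ ∑ i ∈ s, a i * v i := by
  rcases s.eq_empty_or_nonempty with rfl | hs
  · simp
  -- Shifting the weights by their minimum `b` changes both sides by `b * ∑ u = b * ∑ v`.
  set b := a (s.max' hs)
  have shift : ∀ w : ι → R, ∑ i ∈ s, a i * w i = ∑ i ∈ s, (a i - b) * w i + b * ∑ i ∈ s, w i := by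
    intro w
    simp only [sub_mul, sum_sub_distrib, mul_sum]
    ring
  rw [shift u, shift v, hsum]
  refine add_le_add_left ?_ _
  exact sum_mul_le_sum_mul_of_sum_filter_le
    (fun i hi j hj hij => sub_le_sub_right (ha hi hj hij) b)
    (fun i hi => sub_nonneg.mpr (ha hi (s.max'_mem hs) (s.le_max' i hi))) huv

theorem Antitone.sum_le_sum_filter_val_lt_card {n : ℕ} {x : Fin n → R} (hx : Antitone x)
    (T : Finset (Fin n)) :
    ∑ i ∈ T, x i ≤ ∑ i ∈ univ.filter (fun i : Fin n => (i : ℕ) < #T), x i := by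
  have hT : #T ≤ n := by simpa using card_le_univ T
  -- Compare the indicators of `T` and of the initial segment of the same size.
  have key := sum_mul_le_sum_mul_of_sum_filter_le_of_sum_eq (s := univ) (hx.antitoneOn _)
    (u := fun i => if i ∈ T then 1 else 0) (v := fun i => if (i : ℕ) < #T then 1 else 0) ?_ ?_
  · simpa [mul_boole, sum_ite_mem, ← sum_filter] using key
  · intro i _
    simp only [sum_boole, filter_filter]
    refine Nat.mono_cast ?_
    have h₁ : #{j | j ≤ i ∧ j ∈ T} ≤ #T := card_le_card fun j => by simp +contextual
    have h₂ : #{j | j ≤ i ∧ j ∈ T} ≤ i + 1 :=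
      (card_le_card fun j => by simp +contextual).trans (Fin.card_Iic i).le
    have h₃ : #{j : Fin n | j ≤ i ∧ (j : ℕ) < #T} = min n (min (i + 1) #T) := by
      rw [← Fin.card_filter_val_lt]
      congr 1
      ext j
      simp only [mem_filter, mem_univ, true_and, Fin.le_def, lt_min_iff]
      omega
    omega
  · simp [sum_boole, Fin.card_filter_val_lt, hT]

theorem exists_perm_sum_mul_le_sum_mul {n : ℕ} {x t : Fin n → R} (hsum : ∑ i, t i = ∑ i, x i)
    (hS : ∀ S : Finset (Fin n), S.Nonempty →
      ∑ i ∈ S, t i ≤ ∑ i ∈ univ.filter (fun i : Fin n => (i : ℕ) < #S), x i)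
    (c : Fin n → R) : ∃ w : Equiv.Perm (Fin n), ∑ i, c i * t i ≤ ∑ i, c i * x (w i) := by
  set τ := Tuple.sort fun i => -c i
  have hτ : Antitone (c ∘ τ) := fun i j hij =>
    neg_le_neg_iff.mp (Tuple.monotone_sort (fun i => -c i) hij)
  have hprefix : ∀ i, ∑ j ∈ Iic i, t (τ j) ≤ ∑ j ∈ Iic i, x j := by
    intro i
    have h := hS ((Iic i).map τ.toEmbedding) ⟨τ i, by simp⟩
    have hIic : univ.filter (fun j : Fin n => (j : ℕ) < (i : ℕ) + 1) = Iic i :=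
      Finset.ext fun j => by
        simp only [mem_filter, mem_univ, true_and, mem_Iic, Fin.le_def]
        omega
    rwa [sum_map, card_map, Fin.card_Iic, hIic] at h
  refine ⟨τ⁻¹, ?_⟩
  calc ∑ i, c i * t i = ∑ i, c (τ i) * t (τ i) := (Equiv.sum_comp τ fun i => c i * t i).symm
    _ ≤ ∑ i, c (τ i) * x i :=
      sum_mul_le_sum_mul_of_sum_filter_le_of_sum_eq (hτ.antitoneOn _)
        (fun i _ => by simpa only [filter_ge_eq_Iic] using hprefix i)
        (by rw [Equiv.sum_comp τ t, hsum])
    _ = ∑ i, c i * x (τ⁻¹ i) := by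
      rw [← Equiv.sum_comp τ fun i => c i * x (τ⁻¹ i)]
      simp

end Majorization

theorem mem_convexHull_of_forall_exists_le {E : Type*} [AddCommGroup E] [Module ℝ E]
    [TopologicalSpace E] [IsTopologicalAddGroup E] [ContinuousSMul ℝ E] [LocallyConvexSpace ℝ E]
    [T2Space E] {s : Set E} (hs : s.Finite) {x : E}
    (h : ∀ f : StrongDual ℝ E, ∃ y ∈ s, f x ≤ f y) : x ∈ convexHull ℝ s := by
  by_contra hx
  obtain ⟨f, u, hfu, hux⟩ := geometric_hahn_banach_closed_point (convex_convexHull ℝ s)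
    (hs.isCompact_convexHull ℝ).isClosed hx
  obtain ⟨y, hy, hxy⟩ := h f
  exact (hfu y (subset_convexHull ℝ s hy)).not_ge (hux.le.trans hxy)

theorem isLinearMap_sum_apply {ι R M : Type*} [Semiring R] [AddCommMonoid M] [Module R M]
    (S : Finset ι) : IsLinearMap R fun p : ι → M => ∑ i ∈ S, p i :=
  ⟨fun _ _ => sum_add_distrib, fun r p => (smul_sum (s := S) (f := p) (r := r)).symm⟩

theorem Antitone.sum_eq_and_sum_le_of_mem_permutohedron {n : ℕ} {x : Fin n → ℝ}
    (hx : Antitone x) {t : Fin n → ℝ} (ht : t ∈ permutohedron n x) :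
    ∑ i, t i = ∑ i, x i ∧
      ∀ S : Finset (Fin n),
        ∑ i ∈ S, t i ≤ ∑ i ∈ univ.filter (fun i : Fin n => (i : ℕ) < #S), x i := by
  set C := {p : Fin n → ℝ | ∑ i, p i = ∑ i, x i} ∩
    ⋂ S : Finset (Fin n),
      {p | ∑ i ∈ S, p i ≤ ∑ i ∈ univ.filter (fun i : Fin n => (i : ℕ) < #S), x i}
  have hVC : {p | ∃ w : Equiv.Perm (Fin n), p = fun i => x (w i)} ⊆ C := by
    rintro p ⟨w, rfl⟩
    refine ⟨Equiv.sum_comp w x, Set.mem_iInter.mpr fun S => ?_⟩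
    simpa [sum_map] using hx.sum_le_sum_filter_val_lt_card (S.map w.toEmbedding)
  have hC : Convex ℝ C := (convex_hyperplane (isLinearMap_sum_apply univ) _).inter
    (convex_iInter fun S => convex_halfSpace_le (isLinearMap_sum_apply S) _)
  have htC : t ∈ C := convexHull_min hVC hC ht
  exact ⟨htC.1, Set.mem_iInter.mp htC.2⟩

theorem mem_permutohedron_of_sum_eq_of_sum_le {n : ℕ} {x t : Fin n → ℝ}
    (hsum : ∑ i, t i = ∑ i, x i)
    (hS : ∀ S : Finset (Fin n), S.Nonempty →
      ∑ i ∈ S, t i ≤ ∑ i ∈ univ.filter (fun i : Fin n => (i : ℕ) < #S), x i) :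
    t ∈ permutohedron n x := by
  have hfin : {p | ∃ w : Equiv.Perm (Fin n), p = fun i => x (w i)}.Finite :=
    (Set.finite_range fun w : Equiv.Perm (Fin n) => fun i => x (w i)).subset
      fun _ ⟨w, hw⟩ => ⟨w, hw.symm⟩
  refine mem_convexHull_of_forall_exists_le hfin fun f => ?_
  set c : Fin n → ℝ := fun i => f fun j => if i = j then 1 else 0
  have hf : ∀ p, f p = ∑ i, c i * p i := fun p => by
    simpa [mul_comm] using LinearMap.pi_apply_eq_sum_univ f.toLinearMap p
  obtain ⟨w, hw⟩ := exists_perm_sum_mul_le_sum_mul hsum hS c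
  exact ⟨_, ⟨w, rfl⟩, by simpa only [hf] using hw⟩

theorem stmt6_general (n : ℕ) (x : Fin n → ℝ) (hx : Antitone x) (t : Fin n → ℝ) :
    t ∈ permutohedron n x ↔
      (∑ i, t i = ∑ i, x i ∧
        ∀ S : Finset (Fin n), S.Nonempty →
          ∑ i ∈ S, t i ≤ ∑ i ∈ Finset.univ.filter (fun i : Fin n => (i : ℕ) < S.card), x i) :=
  ⟨fun ht => (hx.sum_eq_and_sum_le_of_mem_permutohedron ht).imp_right fun h S _ => h S,
    fun h => mem_permutohedron_of_sum_eq_of_sum_le h.1 h.2⟩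

theorem stmt6 (n : ℕ) (hn : 1 ≤ n) (x : Fin n → ℝ) (hx : Antitone x) (t : Fin n → ℝ) :
    t ∈ permutohedron n x ↔
      (∑ i, t i = ∑ i, x i ∧
        ∀ S : Finset (Fin n), S.Nonempty →
          ∑ i ∈ S, t i ≤ ∑ i ∈ Finset.univ.filter (fun i : Fin n => (i : ℕ) < S.card), x i) :=
  stmt6_general n x hx t
end

section
/- Let n ≥ 1 and let y_I ≥ 0 be a nonnegative real number for each nonempty subset I ⊆ [n]. Define z_I := Σ_{nonempty J ⊆ I} y_J for each nonempty I ⊆ [n]. Then the Minkowski sum Σ_{nonempty I ⊆ [n]} y_I · Δ_I equals the set {(t_1,…,t_n) ∈ ℝ^n : t_1 + ⋯ + t_n = z_{[n]} and Σ_{i ∈ I} t_i ≥ z_I for every nonempty subset I ⊆ [n]}. -/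
open Pointwise

/-- The `i`-th standard basis vector of `ℝ^n`. -/
def stdVec (n : ℕ) (i : Fin n) : Fin n → ℝ := fun j => if j = i then 1 else 0

/-- The coordinate simplex `Δ_I = ConvexHull{e_i : i ∈ I}`. -/
def coordSimplex (n : ℕ) (I : Finset (Fin n)) : Set (Fin n → ℝ) :=
  convexHull ℝ {p | ∃ i ∈ I, p = stdVec n i}

lemma sum_stdVec_I (n : ℕ) (I : Finset (Fin n)) (b : Fin n) (hb : b ∈ I) :
    ∑ j ∈ I, stdVec n b j = 1 := by
  simp only [stdVec]
  rw [Finset.sum_ite_eq' I b (fun _ => (1:ℝ))]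
  simp [hb]

lemma coordSimplex_mem (n : ℕ) (I : Finset (Fin n)) {x : Fin n → ℝ}
    (hx : x ∈ coordSimplex n I) :
    (∀ j, 0 ≤ x j) ∧ (∀ j, j ∉ I → x j = 0) ∧ ∑ j ∈ I, x j = 1 := by
  have hset : ({p | ∃ i ∈ I, p = stdVec n i} : Set (Fin n → ℝ)) = (stdVec n) '' ↑I := by
    ext p; simp [Set.mem_image, eq_comm]
  rw [coordSimplex, hset, convexHull_eq] at hx
  obtain ⟨ι, s, a, z, ha, hsum, hz, hcm⟩ := hx
  have hx' : x = ∑ i ∈ s, a i • z i := by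
    rw [← hcm, Finset.centerMass_eq_of_sum_1 _ _ hsum]
  have hxj : ∀ j, x j = ∑ i ∈ s, a i * z i j := by
    intro j; rw [hx', Finset.sum_apply]; rfl
  refine ⟨?_, ?_, ?_⟩
  · intro j
    rw [hxj]
    apply Finset.sum_nonneg
    intro i hi
    obtain ⟨b, hb, hzb⟩ := hz i hi
    rw [← hzb]
    have : (0:ℝ) ≤ stdVec n b j := by unfold stdVec; positivity
    exact mul_nonneg (ha i hi) this
  · intro j hj
    rw [hxj]
    apply Finset.sum_eq_zero
    intro i hi
    obtain ⟨b, hb, hzb⟩ := hz i hi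
    have hne : j ≠ b := fun h => hj (h ▸ Finset.mem_coe.mp hb)
    rw [← hzb]; simp [stdVec, hne]
  · calc ∑ j ∈ I, x j = ∑ j ∈ I, ∑ i ∈ s, a i * z i j :=
          Finset.sum_congr rfl fun j _ => hxj j
      _ = ∑ i ∈ s, ∑ j ∈ I, a i * z i j := Finset.sum_comm
      _ = ∑ i ∈ s, a i := by
          refine Finset.sum_congr rfl fun i hi => ?_
          obtain ⟨b, hb, hzb⟩ := hz i hi
          rw [← Finset.mul_sum, ← hzb, sum_stdVec_I n I b (Finset.mem_coe.mp hb), mul_one]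
      _ = 1 := hsum

lemma sum_smul_stdVec_apply (n : ℕ) (s : Finset (Fin n)) (c : Fin n → ℝ) (j : Fin n) :
    (∑ i ∈ s, c i • stdVec n i) j = if j ∈ s then c j else 0 := by
  rw [Finset.sum_apply]
  simp only [Pi.smul_apply, stdVec, smul_eq_mul, mul_ite, mul_one, mul_zero]
  rw [Finset.sum_ite_eq s j c]

lemma stdVec_mem_coordSimplex (n : ℕ) (I : Finset (Fin n)) (i : Fin n) (hi : i ∈ I) :
    stdVec n i ∈ coordSimplex n I :=
  subset_convexHull ℝ _ ⟨i, hi, rfl⟩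

lemma cut_bound (n : ℕ) (y : Finset (Fin n) → ℝ) (hy : ∀ I, 0 ≤ y I)
    (t : Fin n → ℝ)
    (hsum : ∑ i, t i = ∑ J ∈ Finset.univ.filter (fun J : Finset (Fin n) => J.Nonempty), y J)
    (hineq : ∀ I : Finset (Fin n), I.Nonempty →
      (∑ J ∈ Finset.univ.filter (fun J : Finset (Fin n) => J.Nonempty ∧ J ⊆ I), y J)
        ≤ ∑ i ∈ I, t i)
    (S : Finset (Fin n)) :
    ∑ i ∈ S, t i ≤ ∑ I ∈ Finset.univ.filter
        (fun I : Finset (Fin n) => I.Nonempty ∧ (I ∩ S).Nonempty), y I := by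
  classical
  by_cases hS : Sᶜ = (∅ : Finset (Fin n))
  · have hSu : S = Finset.univ := by
      rwa [Finset.compl_eq_empty_iff] at hS
    subst hSu
    have hfeq : Finset.univ.filter (fun I : Finset (Fin n) => I.Nonempty ∧ (I ∩ Finset.univ).Nonempty)
        = Finset.univ.filter (fun I : Finset (Fin n) => I.Nonempty) := by
      apply Finset.filter_congr; intro I _; simp [Finset.inter_univ]
    rw [hfeq, ← hsum]
  · have hScne : Sᶜ.Nonempty := Finset.nonempty_iff_ne_empty.mpr hS
    have h1 := hineq Sᶜ hScne
    have h2 : ∑ i ∈ S, t i + ∑ i ∈ Sᶜ, t i = ∑ i, t i := Finset.sum_add_sum_compl S t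
    -- split the total y-sum
    have h3 : (∑ J ∈ Finset.univ.filter (fun J : Finset (Fin n) => J.Nonempty), y J)
        = (∑ J ∈ Finset.univ.filter (fun J : Finset (Fin n) => J.Nonempty ∧ J ⊆ Sᶜ), y J)
          + ∑ I ∈ Finset.univ.filter
              (fun I : Finset (Fin n) => I.Nonempty ∧ (I ∩ S).Nonempty), y I := by
      rw [← Finset.sum_filter_add_sum_filter_not
        (Finset.univ.filter (fun J : Finset (Fin n) => J.Nonempty)) (fun J => J ⊆ Sᶜ) y]
      congr 1
      · rw [Finset.filter_filter]
      · rw [Finset.filter_filter]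
        apply Finset.sum_congr _ (fun _ _ => rfl)
        apply Finset.filter_congr
        intro I _
        simp only [Finset.not_subset]
        constructor
        · rintro ⟨hne, a, haI, haS⟩
          exact ⟨hne, ⟨a, Finset.mem_inter.mpr ⟨haI, by simpa using haS⟩⟩⟩
        · rintro ⟨hne, a, ha⟩
          rcases Finset.mem_inter.mp ha with ⟨h5, h6⟩
          exact ⟨hne, a, h5, by simpa using h6⟩
    linarith

lemma weak_duality (n : ℕ) (hn : 1 ≤ n) (y : Finset (Fin n) → ℝ) (hy : ∀ I, 0 ≤ y I)
    (t w : Fin n → ℝ)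
    (hsum : ∑ i, t i = ∑ J ∈ Finset.univ.filter (fun J : Finset (Fin n) => J.Nonempty), y J)
    (hineq : ∀ I : Finset (Fin n), I.Nonempty →
      (∑ J ∈ Finset.univ.filter (fun J : Finset (Fin n) => J.Nonempty ∧ J ⊆ I), y J)
        ≤ ∑ i ∈ I, t i)
    (M : Finset (Fin n) → ℝ)
    (hM1 : ∀ I : Finset (Fin n), I.Nonempty → ∃ i ∈ I, M I = w i)
    (hM2 : ∀ I : Finset (Fin n), I.Nonempty → ∀ i ∈ I, w i ≤ M I) :
    ∑ i, w i * t i ≤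
      ∑ I ∈ Finset.univ.filter (fun I : Finset (Fin n) => I.Nonempty), y I * M I := by
  classical
  set σ := Tuple.sort w with hσ
  have hu : Monotone (w ∘ σ) := Tuple.monotone_sort w
  set v : ℕ → ℝ := fun k => (w ∘ σ) ⟨min k (n-1), by omega⟩ with hvdef
  have hv : Monotone v := by
    intro a b hab
    apply hu
    simp only [Fin.mk_le_mk]
    omega
  set rank : Fin n → ℕ := fun i => (σ.symm i : ℕ) with hrank
  have hrank_lt : ∀ i, rank i ≤ n - 1 := by
    intro i
    have h2 : rank i = (σ.symm i : ℕ) := rfl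
    have := (σ.symm i).isLt
    omega
  have hvr : ∀ i : Fin n, v (rank i) = w i := by
    intro i
    have h1 : (⟨min (rank i) (n-1), by omega⟩ : Fin n) = σ.symm i := by
      apply Fin.ext
      have h2 : rank i = (σ.symm i : ℕ) := rfl
      have := (σ.symm i).isLt
      simp only [h2]
      omega
    simp only [hvdef, Function.comp_apply, h1, Equiv.apply_symm_apply]
  have claim1 : ∀ r : ℕ, r ≤ n - 1 →
      v r = v 0 + ∑ k ∈ Finset.range (n-1), (v (k+1) - v k) * (if k + 1 ≤ r then 1 else 0) := by
    intro r hr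
    have h2 : ∑ k ∈ Finset.range (n-1), (v (k+1) - v k) * (if k + 1 ≤ r then 1 else 0)
        = ∑ k ∈ (Finset.range (n-1)).filter (fun k => k + 1 ≤ r), (v (k+1) - v k) := by
      rw [Finset.sum_filter]
      apply Finset.sum_congr rfl
      intro k _
      by_cases h : k + 1 ≤ r <;> simp [h]
    have h3 : (Finset.range (n-1)).filter (fun k => k + 1 ≤ r) = Finset.range r := by
      ext k
      simp only [Finset.mem_filter, Finset.mem_range]
      omega
    rw [h2, h3, Finset.sum_range_sub v]
    ring
  set T : ℕ → Finset (Fin n) := fun m => Finset.univ.filter (fun i => m ≤ rank i) with hT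
  have hw_eq : ∀ i, w i = v 0 + ∑ k ∈ Finset.range (n-1),
      (v (k+1) - v k) * (if i ∈ T (k+1) then 1 else 0) := by
    intro i
    rw [← hvr i, claim1 (rank i) (hrank_lt i)]
    congr 1
    apply Finset.sum_congr rfl
    intro k _
    congr 1
    simp [hT]
  -- LHS transform
  have hLHS : ∑ i, w i * t i = v 0 * (∑ i, t i)
      + ∑ k ∈ Finset.range (n-1), (v (k+1) - v k) * (∑ i ∈ T (k+1), t i) := by
    calc ∑ i, w i * t i
        = ∑ i, (v 0 + ∑ k ∈ Finset.range (n-1),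
            (v (k+1) - v k) * (if i ∈ T (k+1) then 1 else 0)) * t i := by
          apply Finset.sum_congr rfl
          intro i _
          rw [← hw_eq i]
      _ = ∑ i, (v 0 * t i) + ∑ i : Fin n, ∑ k ∈ Finset.range (n-1),
            ((v (k+1) - v k) * (if i ∈ T (k+1) then 1 else 0)) * t i := by
          rw [← Finset.sum_add_distrib]
          apply Finset.sum_congr rfl
          intro i _
          rw [add_mul, Finset.sum_mul]
      _ = v 0 * (∑ i, t i) + ∑ k ∈ Finset.range (n-1),
            (v (k+1) - v k) * (∑ i ∈ T (k+1), t i) := by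
          rw [Finset.mul_sum, Finset.sum_comm]
          congr 1
          apply Finset.sum_congr rfl
          intro k _
          rw [Finset.mul_sum, hT, Finset.sum_filter]
          apply Finset.sum_congr rfl
          intro i _
          by_cases h : k + 1 ≤ rank i <;> simp [h, hT] <;> intro h' <;> omega
  -- M values
  have hM_eq : ∀ I : Finset (Fin n), I.Nonempty → M I = v 0 + ∑ k ∈ Finset.range (n-1),
      (v (k+1) - v k) * (if (I ∩ T (k+1)).Nonempty then 1 else 0) := by
    intro I hI
    obtain ⟨ρ, hρI, hρmax⟩ := I.exists_max_image rank hI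
    have hMval : M I = v (rank ρ) := by
      apply le_antisymm
      · obtain ⟨i₀, hi₀, hMi₀⟩ := hM1 I hI
        rw [hMi₀, ← hvr i₀]
        exact hv (hρmax i₀ hi₀)
      · rw [hvr ρ]
        exact hM2 I hI ρ hρI
    rw [hMval, claim1 (rank ρ) (hrank_lt ρ)]
    congr 1
    apply Finset.sum_congr rfl
    intro k _
    congr 1
    have : (k + 1 ≤ rank ρ) ↔ (I ∩ T (k+1)).Nonempty := by
      constructor
      · intro h
        exact ⟨ρ, Finset.mem_inter.mpr ⟨hρI, by simp [hT]; omega⟩⟩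
      · rintro ⟨i, hi⟩
        rcases Finset.mem_inter.mp hi with ⟨hiI, hiT⟩
        have : k + 1 ≤ rank i := by simpa [hT] using hiT
        exact le_trans this (hρmax i hiI)
    simp [this]
  -- RHS transform
  have hRHS : ∑ I ∈ Finset.univ.filter (fun I : Finset (Fin n) => I.Nonempty), y I * M I
      = v 0 * (∑ I ∈ Finset.univ.filter (fun I : Finset (Fin n) => I.Nonempty), y I)
      + ∑ k ∈ Finset.range (n-1), (v (k+1) - v k) *
          (∑ I ∈ Finset.univ.filter
            (fun I : Finset (Fin n) => I.Nonempty ∧ (I ∩ T (k+1)).Nonempty), y I) := by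
    calc ∑ I ∈ Finset.univ.filter (fun I : Finset (Fin n) => I.Nonempty), y I * M I
        = ∑ I ∈ Finset.univ.filter (fun I : Finset (Fin n) => I.Nonempty),
            (y I * v 0 + ∑ k ∈ Finset.range (n-1),
              (v (k+1) - v k) * (y I * (if (I ∩ T (k+1)).Nonempty then 1 else 0))) := by
          apply Finset.sum_congr rfl
          intro I hI
          have hIne : I.Nonempty := by simpa using (Finset.mem_filter.mp hI).2
          rw [hM_eq I hIne, mul_add, Finset.mul_sum]
          congr 1
          apply Finset.sum_congr rfl
          intro k _
          ring
      _ = v 0 * (∑ I ∈ Finset.univ.filter (fun I : Finset (Fin n) => I.Nonempty), y I)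
          + ∑ k ∈ Finset.range (n-1), (v (k+1) - v k) *
              (∑ I ∈ Finset.univ.filter
                (fun I : Finset (Fin n) => I.Nonempty ∧ (I ∩ T (k+1)).Nonempty), y I) := by
          rw [Finset.sum_add_distrib, Finset.mul_sum, Finset.sum_comm]
          congr 1
          · apply Finset.sum_congr rfl; intro I _; ring
          · apply Finset.sum_congr rfl
            intro k _
            have hff : Finset.univ.filter
                (fun I : Finset (Fin n) => I.Nonempty ∧ (I ∩ T (k+1)).Nonempty)
                = (Finset.univ.filter (fun I : Finset (Fin n) => I.Nonempty)).filter
                    (fun I => (I ∩ T (k+1)).Nonempty) := by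
              rw [Finset.filter_filter]
            calc ∑ I ∈ Finset.univ.filter (fun I : Finset (Fin n) => I.Nonempty),
                  (v (k+1) - v k) * (y I * (if (I ∩ T (k+1)).Nonempty then 1 else 0))
                = ∑ I ∈ Finset.univ.filter (fun I : Finset (Fin n) => I.Nonempty),
                    (if (I ∩ T (k+1)).Nonempty then (v (k+1) - v k) * y I else 0) := by
                  apply Finset.sum_congr rfl
                  intro I _
                  by_cases h : (I ∩ T (k+1)).Nonempty <;> simp [h]
              _ = ∑ I ∈ (Finset.univ.filter (fun I : Finset (Fin n) => I.Nonempty)).filter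
                    (fun I => (I ∩ T (k+1)).Nonempty), (v (k+1) - v k) * y I :=
                  (Finset.sum_filter _ _).symm
              _ = (v (k+1) - v k) * (∑ I ∈ Finset.univ.filter
                    (fun I : Finset (Fin n) => I.Nonempty ∧ (I ∩ T (k+1)).Nonempty), y I) := by
                  rw [hff, Finset.mul_sum]
  rw [hLHS, hRHS, hsum]
  apply add_le_add le_rfl
  apply Finset.sum_le_sum
  intro k _
  have hd : 0 ≤ v (k+1) - v k := by
    have := hv (Nat.le_succ k)
    linarith
  exact mul_le_mul_of_nonneg_left (cut_bound n y hy t hsum hineq (T (k+1))) hd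

lemma coordSimplex_finite (n : ℕ) (I : Finset (Fin n)) :
    ({p | ∃ i ∈ I, p = stdVec n i} : Set (Fin n → ℝ)).Finite := by
  have hset : ({p | ∃ i ∈ I, p = stdVec n i} : Set (Fin n → ℝ)) = (stdVec n) '' ↑I := by
    ext p; simp [Set.mem_image, eq_comm]
  rw [hset]
  exact I.finite_toSet.image _

theorem stmt7 (n : ℕ) (hn : 1 ≤ n) (y : Finset (Fin n) → ℝ) (hy : ∀ I, 0 ≤ y I) :
    (∑ I ∈ Finset.univ.filter (fun I : Finset (Fin n) => I.Nonempty),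
        y I • coordSimplex n I) =
      {t : Fin n → ℝ |
        ∑ i, t i =
          (∑ J ∈ Finset.univ.filter (fun J : Finset (Fin n) => J.Nonempty), y J) ∧
        ∀ I : Finset (Fin n), I.Nonempty →
          (∑ J ∈ Finset.univ.filter (fun J : Finset (Fin n) => J.Nonempty ∧ J ⊆ I), y J)
            ≤ ∑ i ∈ I, t i} := by
  classical
  set N := Finset.univ.filter (fun I : Finset (Fin n) => I.Nonempty) with hN
  ext t
  constructor
  · -- easy inclusion
    intro ht
    rw [Set.mem_finset_sum] at ht
    obtain ⟨g, hg, hgsum⟩ := ht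
    have hp : ∀ I : Finset (Fin n), ∃ p : Fin n → ℝ,
        I ∈ N → (p ∈ coordSimplex n I ∧ g I = y I • p) := by
      intro I
      by_cases hI : I ∈ N
      · obtain ⟨p, hp1, hp2⟩ := hg hI
        exact ⟨p, fun _ => ⟨hp1, hp2.symm⟩⟩
      · exact ⟨0, fun h => absurd h hI⟩
    choose p hp using hp
    have htj : ∀ j, t j = ∑ I ∈ N, y I * p I j := by
      intro j
      rw [← hgsum, Finset.sum_apply]
      apply Finset.sum_congr rfl
      intro I hI
      rw [(hp I hI).2]
      rfl
    have hps := fun I (hI : I ∈ N) => coordSimplex_mem n I (hp I hI).1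
    constructor
    · -- total sum
      calc ∑ j, t j = ∑ j : Fin n, ∑ I ∈ N, y I * p I j :=
            Finset.sum_congr rfl fun j _ => htj j
        _ = ∑ I ∈ N, ∑ j : Fin n, y I * p I j := Finset.sum_comm
        _ = ∑ I ∈ N, y I := by
            apply Finset.sum_congr rfl
            intro I hI
            rw [← Finset.mul_sum]
            have : ∑ j : Fin n, p I j = 1 := by
              rw [← (hps I hI).2.2]
              exact (Finset.sum_subset (Finset.subset_univ I)
                (fun j _ hj => (hps I hI).2.1 j hj)).symm
            rw [this, mul_one]
    · -- inequalities
      intro K hK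
      have hKt : ∑ i ∈ K, t i = ∑ I ∈ N, y I * (∑ j ∈ K, p I j) := by
        calc ∑ i ∈ K, t i = ∑ i ∈ K, ∑ I ∈ N, y I * p I i :=
              Finset.sum_congr rfl fun j _ => htj j
          _ = ∑ I ∈ N, ∑ i ∈ K, y I * p I i := Finset.sum_comm
          _ = ∑ I ∈ N, y I * (∑ j ∈ K, p I j) := by
              apply Finset.sum_congr rfl
              intro I _
              rw [Finset.mul_sum]
      rw [hKt]
      have hsub : Finset.univ.filter (fun J : Finset (Fin n) => J.Nonempty ∧ J ⊆ K)
          = N.filter (fun J => J ⊆ K) := by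
        rw [hN, Finset.filter_filter]
      rw [hsub]
      calc ∑ J ∈ N.filter (fun J => J ⊆ K), y J
          = ∑ J ∈ N.filter (fun J => J ⊆ K), y J * (∑ j ∈ K, p J j) := by
            apply Finset.sum_congr rfl
            intro J hJ
            rcases Finset.mem_filter.mp hJ with ⟨hJN, hJK⟩
            have h1 : ∑ j ∈ K, p J j = 1 := by
              rw [← (hps J hJN).2.2]
              exact (Finset.sum_subset hJK (fun j _ hj => (hps J hJN).2.1 j hj)).symm
            rw [h1, mul_one]
        _ ≤ ∑ I ∈ N, y I * (∑ j ∈ K, p I j) := by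
            apply Finset.sum_le_sum_of_subset_of_nonneg (Finset.filter_subset _ _)
            intro I hI _
            exact mul_nonneg (hy I) (Finset.sum_nonneg fun j _ => (hps I hI).1 j)
  · -- hard inclusion
    intro ht
    obtain ⟨hsum, hineq⟩ := ht
    by_contra hmem
    -- convexity and closedness of the Minkowski sum
    have hconv : Convex ℝ (∑ I ∈ N, y I • coordSimplex n I) := by
      apply Finset.sum_induction _ (fun s => Convex ℝ s)
      · exact fun a b ha hb => ha.add hb
      · rw [show (0 : Set (Fin n → ℝ)) = {0} from rfl]
        exact convex_singleton 0
      · exact fun I _ => (convex_convexHull ℝ _).smul (y I)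
    have hcomp : IsCompact (∑ I ∈ N, y I • coordSimplex n I) := by
      apply Finset.sum_induction _ IsCompact
      · exact fun a b ha hb => ha.add hb
      · rw [show (0 : Set (Fin n → ℝ)) = {0} from rfl]
        exact isCompact_singleton
      · intro I _
        exact IsCompact.smul (y I) ((coordSimplex_finite n I).isCompact_convexHull (𝕜 := ℝ))
    obtain ⟨f, u, hfu, hut⟩ :=
      geometric_hahn_banach_closed_point hconv hcomp.isClosed hmem
    set w : Fin n → ℝ := fun i => f (stdVec n i) with hw
    have hrepr : ∀ a : Fin n → ℝ, f a = ∑ i, a i * w i := by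
      intro a
      have ha : a = ∑ i, a i • stdVec n i := by
        ext j
        rw [Finset.sum_apply]
        simp only [Pi.smul_apply, stdVec, smul_eq_mul, mul_ite, mul_one, mul_zero]
        rw [Finset.sum_ite_eq Finset.univ j a]
        simp
      conv_lhs => rw [ha]
      rw [map_sum]
      apply Finset.sum_congr rfl
      intro i _
      rw [map_smul]
      rfl
    have hpick : ∀ I : Finset (Fin n), ∃ i : Fin n,
        I.Nonempty → (i ∈ I ∧ ∀ j ∈ I, w j ≤ w i) := by
      intro I
      by_cases hI : I.Nonempty
      · obtain ⟨i, hi, hmax⟩ := I.exists_max_image w hI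
        exact ⟨i, fun _ => ⟨hi, hmax⟩⟩
      · exact ⟨⟨0, hn⟩, fun h => absurd h hI⟩
    choose gp hgp using hpick
    set vpt := ∑ I ∈ N, y I • stdVec n (gp I) with hvpt
    have hv_mem : vpt ∈ ∑ I ∈ N, y I • coordSimplex n I := by
      apply Set.finset_sum_mem_finset_sum
      intro I hI
      have hIne : I.Nonempty := by
        rw [hN] at hI
        simpa using (Finset.mem_filter.mp hI).2
      apply Set.smul_mem_smul_set
      exact subset_convexHull ℝ _ ⟨gp I, (hgp I hIne).1, rfl⟩
    have h1 : f vpt < u := hfu _ hv_mem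
    have h2 : f t ≤ f vpt := by
      have hfv : f vpt = ∑ I ∈ N, y I * w (gp I) := by
        rw [hvpt, map_sum]
        apply Finset.sum_congr rfl
        intro I _
        rw [map_smul]
        rfl
      have hft : f t = ∑ i, w i * t i := by
        rw [hrepr t]
        apply Finset.sum_congr rfl
        intro i _
        ring
      rw [hft, hfv]
      exact weak_duality n hn y hy t w hsum hineq (fun I => w (gp I))
        (fun I hI => ⟨gp I, (hgp I hI).1, rfl⟩)
        (fun I hI i hi => (hgp I hI).2 i hi)
    linarith
end

section
/- Let n ≥ 1 and let I_1,…,I_m ⊆ [n] be nonempty subsets. If b ∈ ℤ^n is an integer lattice point of the Minkowski sum Δ_{I_1} + ⋯ + Δ_{I_m}, then there exist indices j_1 ∈ I_1, …, j_m ∈ I_m such that b = e_{j_1} + ⋯ + e_{j_m}. -/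
open Pointwise

lemma coordSimplex_subset (n : ℕ) (I : Finset (Fin n)) :
    coordSimplex n I ⊆
      {x | (∀ k, 0 ≤ x k) ∧ (∑ k, x k) = 1 ∧ ∀ k ∉ I, x k = 0} := by
  apply convexHull_min
  · rintro p ⟨i, hi, rfl⟩
    refine ⟨fun k => ?_, ?_, fun k hk => ?_⟩
    · unfold stdVec; split <;> norm_num
    · simp [stdVec]
    · unfold stdVec
      have : k ≠ i := fun h => hk (h ▸ hi)
      simp [this]
  · rintro x ⟨hx0, hx1, hx2⟩ y ⟨hy0, hy1, hy2⟩ a c ha hc hac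
    refine ⟨fun k => ?_, ?_, fun k hk => ?_⟩
    · have : (a • x + c • y) k = a * x k + c * y k := rfl
      rw [this]
      exact add_nonneg (mul_nonneg ha (hx0 k)) (mul_nonneg hc (hy0 k))
    · have : ∀ k, (a • x + c • y) k = a * x k + c * y k := fun k => rfl
      simp only [this, Finset.sum_add_distrib, ← Finset.mul_sum, hx1, hy1]
      linarith
    · have : (a • x + c • y) k = a * x k + c * y k := rfl
      rw [this, hx2 k hk, hy2 k hk]; ring

theorem stmt12 (n m : ℕ) (hn : 1 ≤ n) (I : Fin m → Finset (Fin n)) (hI : ∀ i, (I i).Nonempty)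
    (b : Fin n → ℤ)
    (hb : (fun k => (b k : ℝ)) ∈ ∑ i : Fin m, coordSimplex n (I i)) :
    ∃ j : Fin m → Fin n, (∀ i, j i ∈ I i) ∧
      (fun k => (b k : ℝ)) = ∑ i : Fin m, stdVec n (j i) := by
  classical
  rw [Set.mem_fintype_sum] at hb
  obtain ⟨x, hx, hsum⟩ := hb
  have hprop : ∀ i, (∀ k, 0 ≤ x i k) ∧ (∑ k, x i k) = 1 ∧ ∀ k ∉ I i, x i k = 0 :=
    fun i => coordSimplex_subset n (I i) (hx i)
  have hbk : ∀ k, (b k : ℝ) = ∑ i, x i k := by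
    intro k
    have := congrFun hsum k
    rw [Finset.sum_apply] at this
    exact this.symm
  have hbnn : ∀ k, 0 ≤ b k := by
    intro k
    have : (0 : ℝ) ≤ (b k : ℝ) := by
      rw [hbk k];
      exact Finset.sum_nonneg fun i _ => (hprop i).1 k
    exact_mod_cast this
  have htn : ∀ k, (((b k).toNat : ℝ)) = (b k : ℝ) := by
    intro k
    exact_mod_cast congrArg (Int.cast : ℤ → ℝ) (Int.toNat_of_nonneg (hbnn k))
  have hbtot : ∑ k, ((b k).toNat : ℝ) = (m : ℝ) := by
    have : ∑ k, (b k : ℝ) = (m : ℝ) := by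
      simp only [hbk]
      rw [Finset.sum_comm]
      simp [(fun i => (hprop i).2.1)]
    rw [← this]
    exact Finset.sum_congr rfl fun k _ => htn k
  have hbtotN : ∑ k, (b k).toNat = m := by
    have := hbtot
    push_cast at this
    exact_mod_cast this
  -- Hall's theorem setup
  set α := Σ k : Fin n, Fin ((b k).toNat) with hα
  let t : Fin m → Finset α := fun i => Finset.univ.filter (fun p => 0 < x i p.1)
  have hcard : ∀ P : Fin n → Prop, [DecidablePred P] →
      (Finset.univ.filter (fun p : α => P p.1)).card
        = ∑ k ∈ Finset.univ.filter P, (b k).toNat := by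
    intro P _
    have : Finset.univ.filter (fun p : α => P p.1)
        = (Finset.univ.filter P).sigma (fun _ => Finset.univ) := by
      ext ⟨k, c⟩
      rw [Finset.mem_filter, Finset.mem_sigma]
      simp
    rw [this, Finset.card_sigma]
    simp
  have hall : ∀ s : Finset (Fin m), s.card ≤ (s.biUnion t).card := by
    intro s
    have hbu : s.biUnion t
        = Finset.univ.filter (fun p : α => ∃ i ∈ s, 0 < x i p.1) := by
      ext p
      simp [t]
    rw [hbu, hcard (fun k => ∃ i ∈ s, 0 < x i k)]
    set K := Finset.univ.filter (fun k => ∃ i ∈ s, 0 < x i k) with hK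
    have key : (s.card : ℝ) ≤ ∑ k ∈ K, ((b k).toNat : ℝ) := by
      have h1 : (s.card : ℝ) = ∑ i ∈ s, ∑ k ∈ K, x i k := by
        have : ∀ i ∈ s, ∑ k ∈ K, x i k = 1 := by
          intro i hi
          rw [← (hprop i).2.1]
          apply Finset.sum_subset (Finset.subset_univ _)
          intro k _ hk
          rcases lt_or_eq_of_le ((hprop i).1 k) with h | h
          · exact absurd (by rw [hK]; simp; exact ⟨i, hi, h⟩) hk
          · exact h.symm
        rw [Finset.sum_congr rfl this]
        simp
      rw [h1, Finset.sum_comm]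
      have h2 : ∀ k ∈ K, ∑ i ∈ s, x i k ≤ ((b k).toNat : ℝ) := by
        intro k _
        rw [htn k, hbk k]
        exact Finset.sum_le_sum_of_subset_of_nonneg (Finset.subset_univ _)
          (fun i _ _ => (hprop i).1 k)
      exact Finset.sum_le_sum h2
    have key2 : (s.card : ℝ) ≤ ((∑ k ∈ K, (b k).toNat : ℕ) : ℝ) := by
      push_cast
      exact key
    exact_mod_cast key2
  obtain ⟨f, hfinj, hft⟩ := (Finset.all_card_le_biUnion_card_iff_exists_injective t).mp hall
  refine ⟨fun i => (f i).1, ?_, ?_⟩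
  · intro i
    have hpos : 0 < x i (f i).1 := by
      have := hft i
      simp [t] at this
      exact this
    by_contra hk
    rw [(hprop i).2.2 _ hk] at hpos
    exact lt_irrefl 0 hpos
  · -- counting
    have hposj : ∀ i, 0 < x i (f i).1 := by
      intro i
      have := hft i
      simpa [t] using this
    set j : Fin m → Fin n := fun i => (f i).1 with hj
    have hle : ∀ k, ({i | j i = k} : Finset (Fin m)).card ≤ (b k).toNat := by
      intro k
      have : ({i | j i = k} : Finset (Fin m)).card
          ≤ (Finset.univ.filter (fun p : α => p.1 = k)).card := by
        apply Finset.card_le_card_of_injOn f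
        · intro i hi
          simp only [Finset.mem_coe, Finset.mem_filter, Finset.mem_univ, true_and]
          simp only [Finset.mem_coe, Finset.mem_filter, Finset.mem_univ, true_and] at hi
          exact hi
        · exact hfinj.injOn
      rw [hcard (fun k' => k' = k)] at this
      simpa [Finset.filter_eq'] using this
    have hsumfib : ∑ k, ({i | j i = k} : Finset (Fin m)).card = m := by
      have := Finset.card_eq_sum_card_fiberwise
        (f := j) (s := Finset.univ) (t := Finset.univ) (fun i _ => Finset.mem_univ (j i))
      simpa using this.symm
    have heq : ∀ k, ({i | j i = k} : Finset (Fin m)).card = (b k).toNat := by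
      have := (Finset.sum_eq_sum_iff_of_le
        (s := Finset.univ) (f := fun k => ({i | j i = k} : Finset (Fin m)).card)
        (g := fun k => (b k).toNat) (fun k _ => hle k)).mp (by rw [hsumfib, hbtotN])
      exact fun k => this k (Finset.mem_univ k)
    funext k
    rw [Finset.sum_apply]
    have : ∀ i ∈ Finset.univ, stdVec n (j i) k = if j i = k then (1:ℝ) else 0 := by
      intro i _
      unfold stdVec
      by_cases h : k = j i <;> simp [h, eq_comm]
    rw [Finset.sum_congr rfl this, Finset.sum_boole]
    have hcast : ((Finset.univ.filter (fun i => j i = k)).card : ℝ) = ((b k).toNat : ℝ) := by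
      exact_mod_cast heq k
    rw [hcast, htn k]
end

section
/- Let n ≥ 1. The regular permutohedron P_n(n−1, n−2, …, 1, 0), i.e., the convex hull in ℝ^n of the points (w(1)−1, …, w(n)−1) over all permutations w ∈ S_n, equals the graphical zonotope of the complete graph: the Minkowski sum Σ_{1 ≤ i < j ≤ n} ConvexHull{e_i, e_j} of the line segments joining e_i and e_j over all pairs 1 ≤ i < j ≤ n. -/
open Pointwise

open Finset

private lemma card_pairs (n : ℕ) (w : Equiv.Perm (Fin n)) (k : Fin n) :
    (Finset.univ.filter fun p : Fin n × Fin n =>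
        p.1 < p.2 ∧ ((w p.1 < w p.2 ∧ k = p.1) ∨ (¬ w p.1 < w p.2 ∧ k = p.2))).card
      = n - 1 - (w k : ℕ) := by
  classical
  have h1 : (Finset.univ.filter fun p : Fin n × Fin n =>
        p.1 < p.2 ∧ ((w p.1 < w p.2 ∧ k = p.1) ∨ (¬ w p.1 < w p.2 ∧ k = p.2))).card
      = (Finset.univ.filter fun l : Fin n => w k < w l).card := by
    apply Finset.card_bij' (fun p _ => if p.1 = k then p.2 else p.1)
      (fun l _ => if k < l then (k, l) else (l, k))
    · intro p hp
      simp only [mem_filter, mem_univ, true_and] at hp ⊢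
      obtain ⟨hlt, h | h⟩ := hp
      · rw [if_pos h.2.symm]
        exact h.2 ▸ h.1
      · have h1k : p.1 ≠ k := by rw [h.2]; exact ne_of_lt hlt
        rw [if_neg h1k]
        have hne : p.1 ≠ p.2 := ne_of_lt hlt
        have hwlt : w p.2 < w p.1 := by
          rcases lt_or_eq_of_le (not_lt.mp h.1) with h' | h'
          · exact h'
          · exact absurd (w.injective h') hne.symm
        rw [h.2]
        exact hwlt
    · intro l hl
      simp only [mem_filter, mem_univ, true_and] at hl ⊢
      have hkl : k ≠ l := fun h => absurd (h ▸ hl) (lt_irrefl _)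
      rcases lt_or_gt_of_ne hkl with h | h
      · rw [if_pos h]
        exact ⟨h, Or.inl ⟨hl, rfl⟩⟩
      · rw [if_neg (not_lt.mpr (le_of_lt h))]
        exact ⟨h, Or.inr ⟨not_lt.mpr (le_of_lt hl), rfl⟩⟩
    · intro p hp
      simp only [mem_filter, mem_univ, true_and] at hp
      obtain ⟨hlt, h | h⟩ := hp
      · have hklt : k < p.2 := by rw [h.2]; exact hlt
        rw [if_pos h.2.symm, if_pos hklt]
        exact Prod.ext h.2 rfl
      · have h1k : p.1 ≠ k := by rw [h.2]; exact ne_of_lt hlt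
        have hklt : p.1 < k := by rw [h.2]; exact hlt
        rw [if_neg h1k, if_neg (not_lt.mpr (le_of_lt hklt))]
        exact Prod.ext rfl h.2
    · intro l hl
      simp only [mem_filter, mem_univ, true_and] at hl
      have hkl : k ≠ l := fun h => absurd (h ▸ hl) (lt_irrefl _)
      rcases lt_or_gt_of_ne hkl with h | h
      · rw [if_pos h]
        simp
      · rw [if_neg (not_lt.mpr (le_of_lt h))]
        rw [if_neg (ne_of_gt h).symm]
  rw [h1]
  have h2 : (Finset.univ.filter fun l : Fin n => w k < w l).card
      = (Finset.Ioi (w k)).card := by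
    apply Finset.card_equiv w
    intro l
    simp [Finset.mem_Ioi]
  rw [h2, Fin.card_Ioi]

private lemma vec_eq_sum (n : ℕ) (y : Fin n → ℝ) : y = ∑ k, y k • stdVec n k := by
  funext j
  simp only [Finset.sum_apply, Pi.smul_apply, stdVec, smul_eq_mul, mul_ite, mul_one, mul_zero]
  rw [Finset.sum_ite_eq]
  simp

private lemma vertex_eq (n : ℕ) (w : Equiv.Perm (Fin n)) :
    (fun i => ((n - 1 - (w i : ℕ) : ℕ) : ℝ)) =
      ∑ p ∈ Finset.univ.filter (fun p : Fin n × Fin n => p.1 < p.2),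
        (if w p.1 < w p.2 then stdVec n p.1 else stdVec n p.2) := by
  classical
  funext k
  rw [Finset.sum_apply]
  have hterm : ∀ p ∈ Finset.univ.filter (fun p : Fin n × Fin n => p.1 < p.2),
      (if w p.1 < w p.2 then stdVec n p.1 else stdVec n p.2) k
        = if (w p.1 < w p.2 ∧ k = p.1) ∨ (¬ w p.1 < w p.2 ∧ k = p.2) then (1:ℝ) else 0 := by
    intro p _
    by_cases h : w p.1 < w p.2 <;> by_cases h' : k = p.1 <;> by_cases h'' : k = p.2 <;>
      simp [stdVec, h, h', h'']
  rw [Finset.sum_congr rfl hterm, Finset.sum_boole, Finset.filter_filter, card_pairs]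

private lemma f_apply (n : ℕ) (f : (Fin n → ℝ) →L[ℝ] ℝ) (y : Fin n → ℝ) :
    f y = ∑ k, y k * f (stdVec n k) := by
  conv_lhs => rw [vec_eq_sum n y]
  rw [map_sum]
  simp [smul_eq_mul]

private lemma sum_max (n : ℕ) (v : Fin n → ℝ) (σ : Equiv.Perm (Fin n))
    (hσ : Monotone (v ∘ σ)) :
    ∑ p ∈ Finset.univ.filter (fun p : Fin n × Fin n => p.1 < p.2), max (v p.1) (v p.2)
      = ∑ p ∈ Finset.univ.filter (fun p : Fin n × Fin n => p.1 < p.2), v (σ p.2) := by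
  classical
  apply Finset.sum_nbij'
    (i := fun p : Fin n × Fin n =>
      if σ⁻¹ p.1 < σ⁻¹ p.2 then (σ⁻¹ p.1, σ⁻¹ p.2) else (σ⁻¹ p.2, σ⁻¹ p.1))
    (j := fun p : Fin n × Fin n =>
      if σ p.1 < σ p.2 then (σ p.1, σ p.2) else (σ p.2, σ p.1))
  · intro p hp
    simp only [mem_filter, mem_univ, true_and] at hp ⊢
    have hne : σ⁻¹ p.1 ≠ σ⁻¹ p.2 := fun h => absurd (σ⁻¹.injective h) (ne_of_lt hp)
    rcases lt_or_gt_of_ne hne with h | h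
    · rw [if_pos h]; exact h
    · rw [if_neg (not_lt.mpr (le_of_lt h))]; exact h
  · intro p hp
    simp only [mem_filter, mem_univ, true_and] at hp ⊢
    have hne : σ p.1 ≠ σ p.2 := fun h => absurd (σ.injective h) (ne_of_lt hp)
    rcases lt_or_gt_of_ne hne with h | h
    · rw [if_pos h]; exact h
    · rw [if_neg (not_lt.mpr (le_of_lt h))]; exact h
  · intro p hp
    simp only [mem_filter, mem_univ, true_and] at hp
    have hne : σ⁻¹ p.1 ≠ σ⁻¹ p.2 := fun h => absurd (σ⁻¹.injective h) (ne_of_lt hp)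
    rcases lt_or_gt_of_ne hne with h | h
    · rw [if_pos h]
      simp only [Equiv.Perm.inv_def, Equiv.apply_symm_apply]
      rw [if_pos hp]
    · rw [if_neg (not_lt.mpr (le_of_lt h))]
      simp only [Equiv.Perm.inv_def, Equiv.apply_symm_apply]
      rw [if_neg (not_lt.mpr (le_of_lt hp))]
  · intro p hp
    simp only [mem_filter, mem_univ, true_and] at hp
    have hne : σ p.1 ≠ σ p.2 := fun h => absurd (σ.injective h) (ne_of_lt hp)
    rcases lt_or_gt_of_ne hne with h | h
    · rw [if_pos h]
      simp only [Equiv.Perm.inv_def, Equiv.symm_apply_apply]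
      rw [if_pos hp]
    · rw [if_neg (not_lt.mpr (le_of_lt h))]
      simp only [Equiv.Perm.inv_def, Equiv.symm_apply_apply]
      rw [if_neg (not_lt.mpr (le_of_lt hp))]
  · intro p hp
    simp only [mem_filter, mem_univ, true_and] at hp
    have hne : σ⁻¹ p.1 ≠ σ⁻¹ p.2 := fun h => absurd (σ⁻¹.injective h) (ne_of_lt hp)
    rcases lt_or_gt_of_ne hne with h | h
    · rw [if_pos h]
      simp only [Equiv.Perm.inv_def, Equiv.apply_symm_apply]
      have : v p.1 ≤ v p.2 := by
        have := hσ (le_of_lt h)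
        simpa [Function.comp] using this
      rw [max_eq_right this]
    · rw [if_neg (not_lt.mpr (le_of_lt h))]
      simp only [Equiv.Perm.inv_def, Equiv.apply_symm_apply]
      have : v p.2 ≤ v p.1 := by
        have := hσ (le_of_lt h)
        simpa [Function.comp] using this
      rw [max_eq_left this]

private lemma sum_rank (n : ℕ) (c : Fin n → ℝ) :
    ∑ p ∈ Finset.univ.filter (fun p : Fin n × Fin n => p.1 < p.2), c p.2
      = ∑ b : Fin n, ((b : ℕ) : ℝ) * c b := by
  classical
  rw [Finset.sum_filter, Fintype.sum_prod_type_right]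
  refine Finset.sum_congr rfl fun b _ => ?_
  show (∑ a : Fin n, if a < b then c b else 0) = _
  rw [← Finset.sum_filter, Finset.sum_const]
  have hIio : Finset.univ.filter (fun a : Fin n => a < b) = Finset.Iio b := by
    ext a; simp
  rw [hIio, Fin.card_Iio, nsmul_eq_mul]

theorem stmt13 (n : ℕ) (hn : 1 ≤ n) :
    permutohedron n (fun i : Fin n => ((n - 1 - (i : ℕ) : ℕ) : ℝ)) =
      ∑ p ∈ Finset.univ.filter (fun p : Fin n × Fin n => p.1 < p.2),
        segment ℝ (stdVec n p.1) (stdVec n p.2) := by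
  classical
  set x : Fin n → ℝ := fun i : Fin n => ((n - 1 - (i : ℕ) : ℕ) : ℝ) with hx
  set F := Finset.univ.filter (fun p : Fin n × Fin n => p.1 < p.2) with hF
  apply Set.Subset.antisymm
  · -- permutohedron ⊆ zonotope
    apply convexHull_min
    · rintro p ⟨w, rfl⟩
      have : (fun i => x (w i)) =
          ∑ p ∈ F, (if w p.1 < w p.2 then stdVec n p.1 else stdVec n p.2) :=
        vertex_eq n w
      rw [this]
      apply Set.finset_sum_mem_finset_sum
      intro p _
      by_cases h : w p.1 < w p.2
      · rw [if_pos h]; exact left_mem_segment ℝ _ _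
      · rw [if_neg h]; exact right_mem_segment ℝ _ _
    · exact convex_sum _ (fun p _ => convex_segment _ _)
  · -- zonotope ⊆ permutohedron
    intro q hq
    rw [Set.mem_finset_sum] at hq
    obtain ⟨g, hg, rfl⟩ := hq
    by_contra hq'
    have hfin : ({p | ∃ w : Equiv.Perm (Fin n), p = fun i => x (w i)} :
        Set (Fin n → ℝ)).Finite := by
      have hr : ({p | ∃ w : Equiv.Perm (Fin n), p = fun i => x (w i)} : Set (Fin n → ℝ))
          = Set.range (fun w : Equiv.Perm (Fin n) => fun i => x (w i)) := by
        ext p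
        simp [Set.mem_range, eq_comm]
      rw [hr]
      exact Set.finite_range _
    obtain ⟨f, u, hfa, hfq⟩ := geometric_hahn_banach_closed_point
      (convex_convexHull ℝ _) (hfin.isClosed_convexHull ℝ) hq'
    set v : Fin n → ℝ := fun k => f (stdVec n k) with hv
    set σ := Tuple.sort v with hσdef
    have hσ : Monotone (v ∘ σ) := Tuple.monotone_sort v
    set w : Equiv.Perm (Fin n) := σ⁻¹.trans Fin.revPerm with hw
    have hpw_mem : (fun i => x (w i)) ∈ permutohedron n x :=
      subset_convexHull ℝ _ ⟨w, rfl⟩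
    have hpw_lt : f (fun i => x (w i)) < u := hfa _ hpw_mem
    -- compute the coordinates of the vertex
    have hcoord : ∀ i : Fin n, x (w i) = ((σ⁻¹ i : ℕ) : ℝ) := by
      intro i
      have h1 : (w i : ℕ) = n - ((σ⁻¹ i : ℕ) + 1) := rfl
      have h2 : (σ⁻¹ i : ℕ) < n := (σ⁻¹ i).is_lt
      simp only [hx]
      rw [h1]
      congr 1
      omega
    -- the value of f on the vertex
    have hfpw : f (fun i => x (w i)) = ∑ k : Fin n, ((σ⁻¹ k : ℕ) : ℝ) * v k := by
      rw [f_apply n f]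
      refine Finset.sum_congr rfl fun k _ => ?_
      rw [hcoord k]
    -- the bound on f q
    have hfq_le : f (∑ p ∈ F, g p) ≤ ∑ p ∈ F, max (v p.1) (v p.2) := by
      rw [map_sum]
      apply Finset.sum_le_sum
      intro p hp
      obtain ⟨a, b, ha, hb, hab, hgp⟩ := hg (by exact hp)
      rw [← hgp]
      rw [map_add, map_smul, map_smul]
      simp only [smul_eq_mul]
      calc a * f (stdVec n p.1) + b * f (stdVec n p.2)
          ≤ a * max (v p.1) (v p.2) + b * max (v p.1) (v p.2) := by
            apply add_le_add
            · exact mul_le_mul_of_nonneg_left (le_max_left _ _) ha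
            · exact mul_le_mul_of_nonneg_left (le_max_right _ _) hb
        _ = max (v p.1) (v p.2) := by rw [← add_mul, hab, one_mul]
    -- the sorting identity
    have hsort : ∑ p ∈ F, max (v p.1) (v p.2) = ∑ k : Fin n, ((σ⁻¹ k : ℕ) : ℝ) * v k := by
      rw [hF, sum_max n v σ hσ, sum_rank n (fun b => v (σ b))]
      rw [← Equiv.sum_comp σ (fun k => ((σ⁻¹ k : ℕ) : ℝ) * v k)]
      refine Finset.sum_congr rfl fun b _ => ?_
      rw [Equiv.Perm.inv_def, Equiv.symm_apply_apply]
    have : f (∑ p ∈ F, g p) ≤ f (fun i => x (w i)) := by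
      rw [hfpw, ← hsort]
      exact hfq_le
    exact absurd (lt_of_lt_of_le hfq (this.trans (le_of_lt hpw_lt))) (lt_irrefl u)
end

section
/- For every n ≥ 1, the following identity of rational numbers holds: (n+1)^{n−1} = Σ_T (n!/2^n) · Π_{j a node of T} (1 + 1/h(j,T)), where the sum is over all plane binary trees T with n nodes and the product is over all n nodes j of T. -/
/-- A plane binary tree: either empty, or a root node with an ordered pair of plane
binary trees (its left and right branches). -/
inductive PBT : Type where
  | leaf : PBT
  | node : PBT → PBT → PBT

/-- The number of nodes of a plane binary tree. -/
def PBT.size : PBT → ℕ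
  | .leaf => 0
  | .node l r => l.size + r.size + 1

/-- The product `Π_j (1 + 1/h(j,T))` over all nodes `j` of `T`, where `h(j,T)` is the
number of nodes of the subtree rooted at `j` (its hook length). -/
def PBT.hookProd : PBT → ℚ
  | .leaf => 1
  | .node l r =>
      l.hookProd * r.hookProd * (1 + 1 / ((l.size + r.size + 1 : ℕ) : ℚ))


deriving instance DecidableEq for PBT

open Finset Finset.Nat

def treesF : ℕ → Finset PBT
  | 0 => {PBT.leaf}
  | n+1 => (Finset.range (n+1)).biUnion fun i =>
      ((treesF (min i n)) ×ˢ (treesF (n - i))).image fun p => PBT.node p.1 p.2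
decreasing_by
  · exact Nat.lt_succ_of_le (min_le_right _ _)
  · exact Nat.lt_succ_of_le (Nat.sub_le _ _)

lemma mem_treesF : ∀ (T : PBT) (n : ℕ), T ∈ treesF n ↔ T.size = n := by
  intro T
  induction T with
  | leaf =>
    intro n
    cases n with
    | zero => simp [treesF, PBT.size]
    | succ m => simp [treesF, PBT.size]
  | node l r ihl ihr =>
    intro n
    cases n with
    | zero => simp [treesF, PBT.size]
    | succ m =>
      simp only [treesF, Finset.mem_biUnion, Finset.mem_range, Finset.mem_image,
        Finset.mem_product, PBT.size]
      constructor
      · rintro ⟨i, hi, ⟨p, ⟨hp1, hp2⟩, heq⟩⟩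
        obtain ⟨rfl, rfl⟩ : l = p.1 ∧ r = p.2 := by
          cases heq; exact ⟨rfl, rfl⟩
        have h1 : p.1.size = min i m := (ihl _).1 hp1
        have h2 : p.2.size = m - i := (ihr _).1 hp2
        omega
      · intro h
        refine ⟨l.size, by omega, ⟨(l, r), ⟨?_, ?_⟩, rfl⟩⟩
        · rw [ihl]; omega
        · rw [ihr]; omega


/-- `Aa k x = x*(x+k)^(k-1)`, with `Aa 0 x = 1`. -/
def Aa : ℕ → ℚ → ℚ
  | 0, _ => 1
  | (k+1), x => x * (x + (k+1))^k

def Qa (n : ℕ) (x y : ℚ) : ℚ :=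
  ∑ p ∈ antidiagonal n, (n.choose p.1 : ℚ) * Aa p.1 x * (y + p.2)^p.2

def Pa (n : ℕ) (x y : ℚ) : ℚ :=
  ∑ p ∈ antidiagonal n, (n.choose p.1 : ℚ) * Aa p.1 x * Aa p.2 y

lemma W (n : ℕ) (x y : ℚ) :
    y * Qa n x (y+1) = ∑ q ∈ antidiagonal (n+1), (n.choose q.1 : ℚ) * Aa q.1 x * Aa q.2 y := by
  rw [sum_antidiagonal_succ' (f := fun q => (n.choose q.1 : ℚ) * Aa q.1 x * Aa q.2 y)]
  simp only [Nat.choose_succ_self, Nat.cast_zero, zero_mul, zero_add]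
  rw [Qa, Finset.mul_sum]
  refine Finset.sum_congr rfl fun p hp => ?_
  show y * ((n.choose p.1 : ℚ) * Aa p.1 x * (y + 1 + p.2) ^ p.2) = _
  rw [show Aa (p.2+1) y = y * (y + (p.2+1))^p.2 from rfl]
  ring

lemma swapQ (n : ℕ) (x y : ℚ) :
    Qa n y (x+1) = ∑ p ∈ antidiagonal n, (n.choose p.1 : ℚ) * Aa p.2 y * ((x+1) + p.1)^p.1 := by
  rw [Qa, ← Finset.Nat.sum_antidiagonal_swap
    (f := fun p => (n.choose p.1 : ℚ) * Aa p.1 y * (x + 1 + p.2)^p.2)]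
  refine Finset.sum_congr rfl fun p hp => ?_
  have hp' : p.1 + p.2 = n := mem_antidiagonal.mp hp
  have h : n.choose p.2 = n.choose p.1 := Nat.choose_symm_of_eq_add (by omega)
  simp only [Prod.fst_swap, Prod.snd_swap, h]

lemma Pa_succ (n : ℕ) (x y : ℚ) :
    Pa (n+1) x y = x * Qa n y (x+1) + y * Qa n x (y+1) := by
  rw [Pa, sum_antidiagonal_succ
    (f := fun q => ((n+1).choose q.1 : ℚ) * Aa q.1 x * Aa q.2 y)]
  rw [W n x y]
  rw [sum_antidiagonal_succ (f := fun q => (n.choose q.1 : ℚ) * Aa q.1 x * Aa q.2 y)]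
  have split : ∀ p ∈ antidiagonal n,
      ((n+1).choose (p.1+1) : ℚ) * Aa (p.1+1) x * Aa p.2 y
        = (n.choose p.1 : ℚ) * Aa (p.1+1) x * Aa p.2 y
          + (n.choose (p.1+1) : ℚ) * Aa (p.1+1) x * Aa p.2 y := by
    intro p hp
    have : (n+1).choose (p.1+1) = n.choose p.1 + n.choose (p.1+1) := Nat.choose_succ_succ _ _
    rw [this]; push_cast; ring
  rw [Finset.sum_congr rfl split, Finset.sum_add_distrib]
  have first : ∑ p ∈ antidiagonal n, (n.choose p.1 : ℚ) * Aa (p.1+1) x * Aa p.2 y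
      = x * Qa n y (x+1) := by
    rw [swapQ, Finset.mul_sum]
    refine Finset.sum_congr rfl fun p hp => ?_
    rw [show Aa (p.1+1) x = x * (x + (p.1+1))^p.1 from rfl]
    ring
  rw [first]
  simp only [Nat.choose_zero_right, Nat.choose_succ_self_right, Nat.cast_one]
  ring

lemma pow_split (y : ℚ) : ∀ j : ℕ, ((y + j)^j : ℚ) = Aa j y + j * (y + j)^(j-1)
  | 0 => by simp [Aa]
  | (m+1) => by
      rw [show Aa (m+1) y = y * (y + (m+1))^m from rfl]
      simp only [Nat.add_sub_cancel]
      push_cast; ring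

lemma choose_key {n i j : ℕ} (h : i + j = n) :
    (j+1) * (n+1).choose i = (n+1) * n.choose i := by
  have h1 : (n+1).choose i = (n+1).choose (j+1) :=
    Nat.choose_symm_of_eq_add (by omega)
  have h2 : (n+1) * n.choose j = (n+1).choose (j+1) * (j+1) := Nat.add_one_mul_choose_eq n j
  have h3 : n.choose j = n.choose i := Nat.choose_symm_of_eq_add (by omega)
  rw [h1, Nat.mul_comm, ← h2, h3]

lemma Qa_eq : ∀ (n : ℕ) (x y : ℚ), Qa n x y = (x + y + n)^n := by
  intro n
  induction n with
  | zero => intro x y; simp [Qa, Aa]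
  | succ n ih =>
    intro x y
    have key : Qa (n+1) x y = Pa (n+1) x y + (n+1) * Qa n x (y+1) := by
      rw [Qa, Pa]
      rw [Finset.sum_congr rfl (fun q (hq : q ∈ antidiagonal (n+1)) => by
        rw [pow_split y q.2]; ring :
        ∀ q ∈ antidiagonal (n+1), ((n+1).choose q.1 : ℚ) * Aa q.1 x * (y + q.2)^q.2
          = ((n+1).choose q.1 : ℚ) * Aa q.1 x * Aa q.2 y
            + ((n+1).choose q.1 : ℚ) * Aa q.1 x * (q.2 * (y + q.2)^(q.2-1)))]
      rw [Finset.sum_add_distrib]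
      congr 1
      rw [sum_antidiagonal_succ' (f := fun q =>
        ((n+1).choose q.1 : ℚ) * Aa q.1 x * (q.2 * (y + q.2)^(q.2-1)))]
      simp only [Nat.cast_zero, zero_mul, mul_zero, zero_add]
      rw [Qa, Finset.mul_sum]
      refine Finset.sum_congr rfl fun p hp => ?_
      have hp' : p.1 + p.2 = n := mem_antidiagonal.mp hp
      have hc := choose_key hp'
      have hcq : ((p.2+1 : ℕ) : ℚ) * ((n+1).choose p.1 : ℚ) = ((n+1 : ℕ) : ℚ) * (n.choose p.1 : ℚ) := by
        exact_mod_cast congrArg (fun t : ℕ => (t : ℚ)) hc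
      simp only [Nat.add_sub_cancel]
      push_cast at hcq ⊢
      rw [show y + ((p.2 : ℚ) + 1) = y + 1 + (p.2 : ℚ) by ring]
      linear_combination (Aa p.1 x * (y + 1 + (p.2 : ℚ))^p.2) * hcq
    rw [key, Pa_succ]
    simp only [ih]
    push_cast [pow_succ]
    ring

def g (n : ℕ) : ℚ := ∑ T ∈ treesF n, T.hookProd

lemma g_zero : g 0 = 1 := by simp [g, treesF, PBT.hookProd]

lemma sum_prod_hook (A B : Finset PBT) (c : ℚ) :
    ∑ p ∈ A ×ˢ B, p.1.hookProd * p.2.hookProd * c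
      = c * ((∑ l ∈ A, l.hookProd) * (∑ r ∈ B, r.hookProd)) := by
  rw [Finset.sum_product, Finset.sum_mul_sum, Finset.mul_sum]
  refine Finset.sum_congr rfl fun x _ => ?_
  rw [Finset.mul_sum]
  exact Finset.sum_congr rfl fun y _ => by ring

lemma g_succ (n : ℕ) :
    g (n+1) = (1 + 1/((n:ℚ)+1)) * ∑ p ∈ antidiagonal n, g p.1 * g p.2 := by
  have hdisj : (↑(Finset.range (n+1)) : Set ℕ).PairwiseDisjoint
      (fun i => ((treesF (min i n)) ×ˢ (treesF (n - i))).image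
        fun p : PBT × PBT => PBT.node p.1 p.2) := by
    intro i hi j hj hij
    simp only [Finset.coe_range, Set.mem_Iio] at hi hj
    refine Finset.disjoint_left.2 fun T hTi hTj => ?_
    simp only [Finset.mem_image, Finset.mem_product] at hTi hTj
    obtain ⟨p, ⟨hp1, _⟩, rfl⟩ := hTi
    obtain ⟨q, ⟨hq1, _⟩, heq⟩ := hTj
    injection heq with e1 e2
    rw [mem_treesF] at hp1 hq1
    rw [e1] at hq1
    omega
  have step1 : g (n+1) = ∑ i ∈ Finset.range (n+1),
      ∑ p ∈ (treesF (min i n)) ×ˢ (treesF (n-i)), (PBT.node p.1 p.2).hookProd := by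
    rw [g, treesF, Finset.sum_biUnion hdisj]
    refine Finset.sum_congr rfl fun i hi => ?_
    exact Finset.sum_image fun p _ q _ h => by
      cases p; cases q; simpa [PBT.node.injEq, Prod.ext_iff] using h
  rw [step1]
  have step2 : ∀ i ∈ Finset.range (n+1),
      (∑ p ∈ (treesF (min i n)) ×ˢ (treesF (n-i)), (PBT.node p.1 p.2).hookProd)
        = (1 + 1/((n:ℚ)+1)) * (g i * g (n-i)) := by
    intro i hi
    have hin : i ≤ n := Nat.lt_succ_iff.mp (Finset.mem_range.mp hi)
    have per : ∀ p ∈ (treesF i) ×ˢ (treesF (n-i)),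
        (PBT.node p.1 p.2).hookProd
          = p.1.hookProd * p.2.hookProd * (1 + 1/((n:ℚ)+1)) := by
      intro p hp
      simp only [Finset.mem_product] at hp
      have h1 : p.1.size = i := (mem_treesF _ _).1 hp.1
      have h2 : p.2.size = n - i := (mem_treesF _ _).1 hp.2
      rw [PBT.hookProd, h1, h2, show i + (n-i) + 1 = n+1 from by omega]
      push_cast
      ring
    rw [min_eq_left hin, Finset.sum_congr rfl per, sum_prod_hook]
    rfl
  rw [Finset.sum_congr rfl step2, ← Finset.mul_sum,
    sum_antidiagonal_eq_sum_range_succ (fun i j => g i * g j)]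

lemma Pa_one (n : ℕ) : Pa (n+1) 1 1 = 2 * ((n:ℚ)+3)^n := by
  rw [Pa_succ, Qa_eq]
  ring

lemma Pa_zero : Pa 0 1 1 = 1 := by simp [Pa, Aa]

lemma g_eq : ∀ n : ℕ, g n = 2^n * Aa n 1 / (n.factorial : ℚ) := by
  intro n
  induction n using Nat.strong_induction_on with
  | _ n ih =>
    match n with
    | 0 => simpa [Aa] using g_zero
    | (t+1) =>
      rw [g_succ]
      have hsum : ∑ p ∈ antidiagonal t, g p.1 * g p.2
          = (2^t / (t.factorial : ℚ)) * Pa t 1 1 := by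
        rw [Pa, Finset.mul_sum]
        refine Finset.sum_congr rfl fun p hp => ?_
        have hpt : p.1 + p.2 = t := mem_antidiagonal.mp hp
        rw [ih p.1 (by omega), ih p.2 (by omega)]
        have hfacN : t.choose p.1 * p.1.factorial * p.2.factorial = t.factorial := by
          have := Nat.choose_mul_factorial_mul_factorial (show p.1 ≤ t by omega)
          rw [show t - p.1 = p.2 from by omega] at this
          linarith [this]
        have hfac : (t.choose p.1 : ℚ) * (p.1.factorial : ℚ) * (p.2.factorial : ℚ)
            = (t.factorial : ℚ) := by exact_mod_cast congrArg (fun k : ℕ => (k:ℚ)) hfacN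
        have h1 : (p.1.factorial : ℚ) ≠ 0 := Nat.cast_ne_zero.2 (Nat.factorial_ne_zero _)
        have h2 : (p.2.factorial : ℚ) ≠ 0 := Nat.cast_ne_zero.2 (Nat.factorial_ne_zero _)
        have ht : (t.factorial : ℚ) ≠ 0 := Nat.cast_ne_zero.2 (Nat.factorial_ne_zero _)
        rw [show (2:ℚ)^t = 2^p.1 * 2^p.2 from by rw [← hpt, pow_add]]
        field_simp
        linear_combination (-(Aa p.1 1 * Aa p.2 1)) * hfac
      rw [hsum]
      match t with
      | 0 =>
        rw [Pa_zero]
        norm_num [Aa, Nat.factorial]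
      | (s+1) =>
        rw [Pa_one s]
        rw [show Aa (s+1+1) 1 = 1 * (1 + (((s+1:ℕ):ℚ) + 1))^(s+1) from rfl]
        have hf1 : ((s+1).factorial : ℚ) ≠ 0 := Nat.cast_ne_zero.2 (Nat.factorial_ne_zero _)
        have hf2 : ((s+1+1).factorial : ℚ) ≠ 0 := Nat.cast_ne_zero.2 (Nat.factorial_ne_zero _)
        rw [Nat.factorial_succ (s+1)]
        push_cast
        have hs2 : ((s:ℚ)+1+1) ≠ 0 := by positivity
        field_simp
        ring


theorem stmt17 (n : ℕ) (hn : 1 ≤ n) :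
    ((n : ℚ) + 1) ^ (n - 1) =
      ∑ᶠ T ∈ {T : PBT | T.size = n},
        ((Nat.factorial n : ℚ) / 2 ^ n) * T.hookProd := by
  have hset : {T : PBT | T.size = n} = ↑(treesF n) := by
    ext T; simp [mem_treesF]
  rw [hset, finsum_mem_coe_finset, ← Finset.mul_sum,
    show (∑ T ∈ treesF n, T.hookProd) = g n from rfl, g_eq]
  obtain ⟨k, rfl⟩ : ∃ k, n = k + 1 := ⟨n-1, by omega⟩
  rw [show Aa (k+1) 1 = 1 * (1 + (((k:ℕ):ℚ) + 1))^k from rfl]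
  have h2 : ((2:ℚ))^(k+1) ≠ 0 := by positivity
  have hf : (((k+1).factorial : ℕ) : ℚ) ≠ 0 := Nat.cast_ne_zero.2 (Nat.factorial_ne_zero _)
  rw [show k + 1 - 1 = k from rfl]
  push_cast
  field_simp
  ring
end
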